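/- arXiv:1107.5190 — 8 statements merged into one kernel-verified Lean document; each statement's English description precedes it below -/
import Mathlib

section
/- Let M ≥ 0, δ ≥ 0, and let f : [0,1] → [0,∞) be a bounded measurable function satisfying f(s) ≤ δ + M ∫_0^s f(u)/√(s−u) du for every s ∈ [0,1]. Then f(s) ≤ δ(1 + 2M√s) e^{πM²s} for every s ∈ [0,1]. -/
/-!
Write `A g s = δ + M ∫₀ˢ g u / √(s - u) du`. The hypothesis is `f ≤ A f` and `A` is
monotone, so `f ≤ Aⁿ C` for every `n`. Since
`∫₀ˢ u^{k/2} / √(s - u) du = B(k/2 + 1, 1/2) s^{(k+1)/2}`, the iterate `Aⁿ C` is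
`δ ∑_{k<n} xᵏ / Γ(k/2 + 1) + C xⁿ / Γ(n/2 + 1)` with `x = M √(π s)`: a truncation of the
Mittag-Leffler function `δ E_{1/2}(x)` plus a remainder. In the series, the odd term
`x^{2j+1} / Γ(j + 3/2)` is at most `2x/√π` times the even term `x^{2j} / j!` (this is
`B(j + 1, 1/2) ≤ B(1, 1/2) = 2`), so the partial sums are at most `(1 + 2M√s) e^{πM²s}`, while
the remainder `C (πM²s)ⁿ / n!` at the even indices `2n` tends to `0`.
-/

open MeasureTheory Set Real
open scoped Nat

theorem integral_rpow_mul_one_sub_rpow {a b : ℝ} (ha : 0 < a) (hb : 0 < b) :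
    ∫ t in (0:ℝ)..1, t ^ (a - 1) * (1 - t) ^ (b - 1) = Gamma a * Gamma b / Gamma (a + b) := by
  have h : Complex.betaIntegral a b =
      ((∫ t in (0:ℝ)..1, t ^ (a - 1) * (1 - t) ^ (b - 1) : ℝ) : ℂ) := by
    rw [Complex.betaIntegral, ← intervalIntegral.integral_ofReal]
    refine intervalIntegral.integral_congr fun t ht => ?_
    rw [uIcc_of_le zero_le_one] at ht
    push_cast
    rw [Complex.ofReal_cpow ht.1, Complex.ofReal_cpow (sub_nonneg.2 ht.2)]
    push_cast
    ring
  rw [show Gamma a * Gamma b / Gamma (a + b) = ProbabilityTheory.beta a b from rfl,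
    ProbabilityTheory.beta_eq_betaIntegralReal a b ha hb, h, Complex.ofReal_re]

theorem integral_sqrt_pow_div_sqrt_one_sub (k : ℕ) :
    ∫ t in (0:ℝ)..1, √t ^ k / √(1 - t) =
      Gamma (k / 2 + 1) * √π / Gamma (k / 2 + 3 / 2) := by
  have h : ∫ t in (0:ℝ)..1, √t ^ k / √(1 - t) =
      ∫ t in (0:ℝ)..1, t ^ ((k / 2 + 1 : ℝ) - 1) * (1 - t) ^ ((1 / 2 : ℝ) - 1) := by
    refine intervalIntegral.integral_congr fun t ht => ?_
    rw [uIcc_of_le zero_le_one] at ht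
    rw [sqrt_eq_rpow, sqrt_eq_rpow, ← rpow_natCast, ← rpow_mul ht.1, div_eq_mul_inv,
      ← rpow_neg (sub_nonneg.2 ht.2)]
    congr 2 <;> ring
  rw [h, integral_rpow_mul_one_sub_rpow (by positivity) (by norm_num), Gamma_one_half_eq]
  congr 2
  ring

theorem integral_sqrt_pow_div_sqrt_sub {s : ℝ} (hs : 0 ≤ s) (k : ℕ) :
    ∫ u in (0:ℝ)..s, √u ^ k / √(s - u) =
      √s ^ (k + 1) * ∫ t in (0:ℝ)..1, √t ^ k / √(1 - t) := by
  rcases hs.eq_or_lt with rfl | hs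
  · simp
  have hscale (t : ℝ) :
      √(s * t) ^ k / √(s - s * t) = √s ^ k / √s * (√t ^ k / √(1 - t)) := by
    rw [show s - s * t = s * (1 - t) by ring, sqrt_mul hs.le, sqrt_mul hs.le, mul_pow,
      mul_div_mul_comm]
  have h := intervalIntegral.integral_comp_mul_left (fun u => √u ^ k / √(s - u)) hs.ne'
    (a := 0) (b := 1)
  simp only [mul_zero, mul_one, hscale, intervalIntegral.integral_const_mul, smul_eq_mul] at h
  rw [eq_inv_mul_iff_mul_eq₀ hs.ne'] at h
  rw [← h, ← mul_assoc, mul_div_left_comm, div_sqrt, ← pow_succ]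

theorem intervalIntegrable_div_sqrt_sub {g : ℝ → ℝ} {s K : ℝ} (hs : 0 ≤ s)
    (hg : AEStronglyMeasurable g (volume.restrict (Ioc 0 s)))
    (hK : ∀ u ∈ Ioc 0 s, |g u| ≤ K) :
    IntervalIntegrable (fun u => g u / √(s - u)) volume 0 s := by
  have hkernel : IntervalIntegrable (fun u => K * (s - u) ^ (-(1 / 2) : ℝ)) volume 0 s := by
    have h := (intervalIntegral.intervalIntegrable_rpow' (a := s - 0) (b := s - s)
      (r := -(1 / 2)) (by norm_num)).comp_sub_left s
    simpa using h.const_mul K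
  rw [intervalIntegrable_iff_integrableOn_Ioc_of_le hs] at hkernel ⊢
  have hsqrt : Continuous fun u => √(s - u) := by fun_prop
  refine hkernel.mono' (hg.div₀ hsqrt.aestronglyMeasurable) ?_
  filter_upwards [ae_restrict_mem measurableSet_Ioc] with u hu
  rw [norm_div, Real.norm_eq_abs, Real.norm_eq_abs, abs_of_nonneg (sqrt_nonneg _),
    rpow_neg (sub_nonneg.2 hu.2), ← sqrt_eq_rpow, ← div_eq_mul_inv]
  exact div_le_div_of_nonneg_right (hK u hu) (sqrt_nonneg _)

theorem ContinuousOn.intervalIntegrable_div_sqrt_sub {g : ℝ → ℝ} {s : ℝ} (hs : 0 ≤ s)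
    (hg : ContinuousOn g (Icc 0 s)) :
    IntervalIntegrable (fun u => g u / √(s - u)) volume 0 s := by
  obtain ⟨K, hK⟩ := isCompact_Icc.exists_bound_of_continuousOn hg
  exact _root_.intervalIntegrable_div_sqrt_sub hs
    ((hg.mono Ioc_subset_Icc_self).aestronglyMeasurable measurableSet_Ioc)
    fun u hu => hK u (Ioc_subset_Icc_self hu)

theorem integral_sqrt_pow_div_sqrt_one_sub_le_two (k : ℕ) :
    ∫ t in (0:ℝ)..1, √t ^ k / √(1 - t) ≤ 2 := by
  have hpow (j : ℕ) : ContinuousOn (fun t : ℝ => √t ^ j) (Icc 0 1) := by fun_prop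
  calc ∫ t in (0:ℝ)..1, √t ^ k / √(1 - t)
      ≤ ∫ t in (0:ℝ)..1, √t ^ 0 / √(1 - t) :=
        intervalIntegral.integral_mono_on zero_le_one
          ((hpow k).intervalIntegrable_div_sqrt_sub zero_le_one)
          ((hpow 0).intervalIntegrable_div_sqrt_sub zero_le_one) fun t ht =>
          div_le_div_of_nonneg_right
            (by simpa using pow_le_one₀ (sqrt_nonneg t) (sqrt_le_one.2 ht.2)) (sqrt_nonneg _)
    _ = 2 := by
      simp only [integral_sqrt_pow_div_sqrt_one_sub, Nat.cast_zero, zero_div, zero_add]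
      rw [Gamma_one, show (3 / 2 : ℝ) = 1 / 2 + 1 by norm_num, Gamma_add_one (by norm_num),
        Gamma_one_half_eq]
      field_simp

theorem sqrt_pi_mul_factorial_le_two_mul_Gamma (n : ℕ) :
    √π * n ! ≤ 2 * Gamma (n + 3 / 2) := by
  have h := integral_sqrt_pow_div_sqrt_one_sub_le_two (2 * n)
  rw [integral_sqrt_pow_div_sqrt_one_sub, div_le_iff₀ (Gamma_pos_of_pos (by positivity))] at h
  push_cast at h
  rwa [show (2 * n : ℝ) / 2 + 1 = n + 1 by ring,
    show (2 * n : ℝ) / 2 + 3 / 2 = n + 3 / 2 by ring, Gamma_nat_eq_factorial, mul_comm] at h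

noncomputable def mittagLefflerHalfTerm (x : ℝ) (k : ℕ) : ℝ := x ^ k / Gamma (k / 2 + 1)

@[fun_prop]
theorem continuous_mittagLefflerHalfTerm (k : ℕ) :
    Continuous fun x => mittagLefflerHalfTerm x k := by
  unfold mittagLefflerHalfTerm
  fun_prop

theorem mittagLefflerHalfTerm_zero (x : ℝ) : mittagLefflerHalfTerm x 0 = 1 := by
  simp [mittagLefflerHalfTerm]

theorem mittagLefflerHalfTerm_two_mul (x : ℝ) (n : ℕ) :
    mittagLefflerHalfTerm x (2 * n) = (x ^ 2) ^ n / n ! := by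
  rw [mittagLefflerHalfTerm, pow_mul, Nat.cast_mul, Nat.cast_two,
    show (2 * n : ℝ) / 2 + 1 = n + 1 by ring, Gamma_nat_eq_factorial]

theorem mittagLefflerHalfTerm_two_mul_add_one_le {x : ℝ} (hx : 0 ≤ x) (n : ℕ) :
    mittagLefflerHalfTerm x (2 * n + 1) ≤ 2 * x / √π * mittagLefflerHalfTerm x (2 * n) := by
  have hΓ : (2 * n + 1 : ℕ) / 2 + 1 = (n + 3 / 2 : ℝ) := by push_cast; ring
  rw [mittagLefflerHalfTerm_two_mul, mittagLefflerHalfTerm, hΓ]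
  calc x ^ (2 * n + 1) / Gamma (n + 3 / 2)
      ≤ x ^ (2 * n + 1) / (√π * n ! / 2) :=
        div_le_div_of_nonneg_left (by positivity) (by positivity)
          (by linarith [sqrt_pi_mul_factorial_le_two_mul_Gamma n])
    _ = 2 * x / √π * ((x ^ 2) ^ n / n !) := by
        rw [pow_succ, pow_mul]
        field_simp

theorem sum_range_two_mul_mittagLefflerHalfTerm_le {x : ℝ} (hx : 0 ≤ x) (n : ℕ) :
    ∑ k ∈ Finset.range (2 * n), mittagLefflerHalfTerm x k ≤
      (1 + 2 * x / √π) * exp (x ^ 2) := by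
  have hpairs (m : ℕ) : ∑ k ∈ Finset.range (2 * m), mittagLefflerHalfTerm x k =
      ∑ j ∈ Finset.range m,
        (mittagLefflerHalfTerm x (2 * j) + mittagLefflerHalfTerm x (2 * j + 1)) := by
    induction m with
    | zero => simp
    | succ m ih =>
      rw [Nat.mul_succ, Finset.sum_range_succ, Finset.sum_range_succ, Finset.sum_range_succ, ih,
        add_assoc]
  calc ∑ k ∈ Finset.range (2 * n), mittagLefflerHalfTerm x k
      ≤ ∑ j ∈ Finset.range n, (1 + 2 * x / √π) * ((x ^ 2) ^ j / j !) := by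
        rw [hpairs]
        refine Finset.sum_le_sum fun j _ => ?_
        have := mittagLefflerHalfTerm_two_mul_add_one_le hx j
        rw [mittagLefflerHalfTerm_two_mul] at this ⊢
        linarith
    _ = (1 + 2 * x / √π) * ∑ j ∈ Finset.range n, (x ^ 2) ^ j / j ! :=
        (Finset.mul_sum ..).symm
    _ ≤ (1 + 2 * x / √π) * exp (x ^ 2) :=
        mul_le_mul_of_nonneg_left (sum_le_exp_of_nonneg (sq_nonneg x) n) (by positivity)

theorem mul_integral_mittagLefflerHalfTerm_div_sqrt_sub (M : ℝ) {s : ℝ} (hs : 0 ≤ s)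
    (k : ℕ) :
    M * ∫ u in (0:ℝ)..s, mittagLefflerHalfTerm (M * √π * √u) k / √(s - u) =
      mittagLefflerHalfTerm (M * √π * √s) (k + 1) := by
  have hΓ : (k + 1 : ℕ) / 2 + 1 = (k / 2 + 3 / 2 : ℝ) := by push_cast; ring
  have hintegrand (u : ℝ) : mittagLefflerHalfTerm (M * √π * √u) k / √(s - u) =
      (M * √π) ^ k / Gamma (k / 2 + 1) * (√u ^ k / √(s - u)) := by
    rw [mittagLefflerHalfTerm, mul_pow]
    ring
  simp_rw [hintegrand]
  rw [intervalIntegral.integral_const_mul, integral_sqrt_pow_div_sqrt_sub hs,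
    integral_sqrt_pow_div_sqrt_one_sub, mittagLefflerHalfTerm, hΓ]
  field_simp
  ring

noncomputable def picardBound (M δ C : ℝ) (n : ℕ) (s : ℝ) : ℝ :=
  δ * ∑ k ∈ Finset.range n, mittagLefflerHalfTerm (M * √π * √s) k +
    C * mittagLefflerHalfTerm (M * √π * √s) n

theorem picardBound_succ (M δ C : ℝ) (n : ℕ) {s : ℝ} (hs : 0 ≤ s) :
    δ + M * ∫ u in (0:ℝ)..s, picardBound M δ C n u / √(s - u) =
      picardBound M δ C (n + 1) s := by
  have hint (k : ℕ) : IntervalIntegrable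
      (fun u => mittagLefflerHalfTerm (M * √π * √u) k / √(s - u)) volume 0 s :=
    ContinuousOn.intervalIntegrable_div_sqrt_sub hs (by fun_prop)
  have hsum : IntervalIntegrable (fun u => ∑ k ∈ Finset.range n,
      δ * (mittagLefflerHalfTerm (M * √π * √u) k / √(s - u))) volume 0 s := by
    simpa only [Finset.sum_fn] using IntervalIntegrable.sum _ fun k _ => (hint k).const_mul δ
  simp only [picardBound, add_div, Finset.mul_sum, Finset.sum_div, mul_div_assoc]
  rw [intervalIntegral.integral_add hsum ((hint n).const_mul C),
    intervalIntegral.integral_finsetSum fun k _ => (hint k).const_mul δ]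
  simp only [intervalIntegral.integral_const_mul, mul_add, Finset.mul_sum, mul_left_comm M,
    mul_integral_mittagLefflerHalfTerm_div_sqrt_sub M hs]
  rw [Finset.sum_range_succ' _ n, mittagLefflerHalfTerm_zero]
  ring

theorem le_picardBound {M δ C : ℝ} {f : ℝ → ℝ} (hM : 0 ≤ M) (hmeas : Measurable f)
    (hnonneg : ∀ s ∈ Icc (0:ℝ) 1, 0 ≤ f s) (hC : ∀ s ∈ Icc (0:ℝ) 1, f s ≤ C)
    (hineq : ∀ s ∈ Icc (0:ℝ) 1, f s ≤ δ + M * ∫ u in (0:ℝ)..s, f u / √(s - u))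
    (n : ℕ) :
    ∀ s ∈ Icc (0:ℝ) 1, f s ≤ picardBound M δ C n s := by
  induction n with
  | zero => simpa [picardBound, mittagLefflerHalfTerm_zero] using hC
  | succ n ih =>
    intro s hs
    have hsub : Icc 0 s ⊆ Icc 0 1 := Icc_subset_Icc_right hs.2
    have hf : IntervalIntegrable (fun u => f u / √(s - u)) volume 0 s :=
      intervalIntegrable_div_sqrt_sub hs.1 hmeas.aestronglyMeasurable fun u hu => by
        have hu := hsub (Ioc_subset_Icc_self hu)
        rw [abs_of_nonneg (hnonneg u hu)]
        exact hC u hu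
    have hbound :
        IntervalIntegrable (fun u => picardBound M δ C n u / √(s - u)) volume 0 s := by
      refine ContinuousOn.intervalIntegrable_div_sqrt_sub hs.1 ?_
      unfold picardBound
      fun_prop
    calc f s ≤ δ + M * ∫ u in (0:ℝ)..s, f u / √(s - u) := hineq s hs
      _ ≤ δ + M * ∫ u in (0:ℝ)..s, picardBound M δ C n u / √(s - u) := by
        gcongr
        exact intervalIntegral.integral_mono_on hs.1 hf hbound fun u hu =>
          div_le_div_of_nonneg_right (ih u (hsub hu)) (sqrt_nonneg _)
      _ = picardBound M δ C (n + 1) s := picardBound_succ M δ C n hs.1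

theorem picardBound_two_mul_le {M δ : ℝ} (hM : 0 ≤ M) (hδ : 0 ≤ δ) (C : ℝ) {s : ℝ}
    (hs : 0 ≤ s) (n : ℕ) :
    picardBound M δ C (2 * n) s ≤
      δ * (1 + 2 * M * √s) * exp (π * M ^ 2 * s) + C * ((π * M ^ 2 * s) ^ n / n !) := by
  have hcoeff : 2 * (M * √π * √s) / √π = 2 * M * √s := by field_simp
  have hsq : (M * √π * √s) ^ 2 = π * M ^ 2 * s := by
    rw [mul_pow, mul_pow, sq_sqrt pi_pos.le, sq_sqrt hs]
    ring
  have hsum := sum_range_two_mul_mittagLefflerHalfTerm_le (x := M * √π * √s) (by positivity) n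
  rw [hcoeff, hsq] at hsum
  rw [picardBound, mittagLefflerHalfTerm_two_mul, hsq, mul_assoc δ]
  gcongr

theorem fractional_gronwall (M δ : ℝ) (hM : 0 ≤ M) (hδ : 0 ≤ δ) (f : ℝ → ℝ)
    (hmeas : Measurable f)
    (hnonneg : ∀ s ∈ Icc (0:ℝ) 1, 0 ≤ f s)
    (hbdd : ∃ C : ℝ, ∀ s ∈ Icc (0:ℝ) 1, f s ≤ C)
    (hineq : ∀ s ∈ Icc (0:ℝ) 1,
      f s ≤ δ + M * ∫ u in (0:ℝ)..s, f u / Real.sqrt (s - u)) :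
    ∀ s ∈ Icc (0:ℝ) 1,
      f s ≤ δ * (1 + 2 * M * Real.sqrt s) * Real.exp (Real.pi * M ^ 2 * s) := by
  obtain ⟨C, hC⟩ := hbdd
  intro s hs
  have hbound (n : ℕ) : f s ≤ δ * (1 + 2 * M * √s) * exp (π * M ^ 2 * s) +
      C * ((π * M ^ 2 * s) ^ n / n !) :=
    (le_picardBound hM hmeas hnonneg hC hineq (2 * n) s hs).trans
      (picardBound_two_mul_le hM hδ C hs.1 n)
  have hremainder := (FloorSemiring.tendsto_pow_div_factorial_atTop (π * M ^ 2 * s)).const_mul C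
  simpa using ge_of_tendsto' (tendsto_const_nhds.add hremainder) hbound
end

section
/- Let a > 0, M ≥ 0, and let f : [0,a] → [0,∞) be a bounded measurable function satisfying f(s) ≤ M ∫_0^s f(u)/√(s−u) du for every s ∈ [0,a]. Then f(s) = 0 for every s ∈ [0,a]. -/
/-!
Bielecki's weighted-norm trick. By the Gamma integral `Γ(1/2) = √π`,
`∫₀ˢ e^{ru} / √(s - u) du ≤ e^{rs} √(π / r)`, so the inequality turns a bound `f ≤ N e^{r·}`
on `[0, a]` into `f ≤ (M √(π / r)) N e^{r·}`. For `r` large the factor `M √(π / r)` is `< 1`,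
and iterating from the bound `f ≤ max C 0 ≤ max C 0 · e^{r·}` forces `f = 0`.
-/

open MeasureTheory Set Real

theorem integral_exp_neg_mul_div_sqrt_Ioi {r : ℝ} (hr : 0 < r) :
    ∫ v in Ioi 0, exp (-(r * v)) / √v = √(π / r) := by
  calc ∫ v in Ioi 0, exp (-(r * v)) / √v
      = ∫ v in Ioi 0, v ^ ((1 / 2 : ℝ) - 1) * exp (-(r * v)) := by
        refine setIntegral_congr_fun measurableSet_Ioi fun v hv => ?_
        rw [sqrt_eq_rpow, div_eq_mul_inv, ← rpow_neg hv.le]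
        norm_num [mul_comm]
    _ = √(π / r) := by
        rw [integral_rpow_mul_exp_neg_mul_Ioi one_half_pos hr, Gamma_one_half_eq,
          ← sqrt_eq_rpow, ← sqrt_mul (by positivity), one_div_mul_eq_div]

theorem integrableOn_exp_neg_mul_div_sqrt_Ioi {r : ℝ} (hr : 0 < r) :
    IntegrableOn (fun v => exp (-(r * v)) / √v) (Ioi 0) :=
  Integrable.of_integral_ne_zero <| by
    rw [integral_exp_neg_mul_div_sqrt_Ioi hr]; positivity

theorem exp_mul_div_sqrt_sub (r s u : ℝ) :
    exp (r * u) / √(s - u) = exp (r * s) * (exp (-(r * (s - u))) / √(s - u)) := by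
  rw [mul_div_assoc', ← exp_add]; ring_nf

section WeightedAbelKernel

variable {r s : ℝ}

theorem intervalIntegrable_exp_neg_mul_div_sqrt (hr : 0 < r) (hs : 0 ≤ s) :
    IntervalIntegrable (fun v => exp (-(r * v)) / √v) volume 0 s :=
  (intervalIntegrable_iff_integrableOn_Ioc_of_le hs).2
    ((integrableOn_exp_neg_mul_div_sqrt_Ioi hr).mono_set Ioc_subset_Ioi_self)

theorem intervalIntegrable_exp_mul_div_sqrt_sub (hr : 0 < r) (hs : 0 ≤ s) :
    IntervalIntegrable (fun u => exp (r * u) / √(s - u)) volume 0 s := by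
  have h := ((intervalIntegrable_exp_neg_mul_div_sqrt hr hs).symm.comp_sub_left s).const_mul
    (exp (r * s))
  simp only [sub_self, sub_zero] at h
  simpa only [exp_mul_div_sqrt_sub r s] using h

theorem integral_exp_mul_div_sqrt_sub_le (hr : 0 < r) (hs : 0 ≤ s) :
    ∫ u in 0..s, exp (r * u) / √(s - u) ≤ exp (r * s) * √(π / r) := by
  simp only [exp_mul_div_sqrt_sub r s, intervalIntegral.integral_const_mul,
    intervalIntegral.integral_comp_sub_left (fun v => exp (-(r * v)) / √v), sub_self, sub_zero]
  gcongr
  rw [intervalIntegral.integral_of_le hs, ← integral_exp_neg_mul_div_sqrt_Ioi hr]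
  refine setIntegral_mono_set (integrableOn_exp_neg_mul_div_sqrt_Ioi hr) ?_
    Ioc_subset_Ioi_self.eventuallyLE
  exact Filter.Eventually.of_forall fun v => by positivity

end WeightedAbelKernel

theorem le_mul_exp_of_le_integral_div_sqrt {f : ℝ → ℝ} {a M N r : ℝ} (hM : 0 ≤ M) (hr : 0 < r)
    (hnonneg : ∀ s ∈ Icc 0 a, 0 ≤ f s)
    (hineq : ∀ s ∈ Icc 0 a, f s ≤ M * ∫ u in (0:ℝ)..s, f u / √(s - u))
    (hN : ∀ u ∈ Icc 0 a, f u ≤ N * exp (r * u)) :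
    ∀ s ∈ Icc 0 a, f s ≤ M * √(π / r) * N * exp (r * s) := by
  intro s hs
  have hN₀ : 0 ≤ N := nonneg_of_mul_nonneg_left ((hnonneg s hs).trans (hN s hs)) (exp_pos _)
  have hmem {u} (hu : u ∈ Ioc 0 s) : u ∈ Icc 0 a := ⟨hu.1.le, hu.2.trans hs.2⟩
  have hint : ∫ u in (0:ℝ)..s, f u / √(s - u) ≤ N * (exp (r * s) * √(π / r)) :=
    calc ∫ u in (0:ℝ)..s, f u / √(s - u)
        ≤ ∫ u in (0:ℝ)..s, N * (exp (r * u) / √(s - u)) := by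
          -- `integral_mono_of_nonneg` also covers a non-integrable `f`, whose integral is `0`.
          simp only [intervalIntegral.integral_of_le hs.1]
          refine integral_mono_of_nonneg ?_
            ((intervalIntegrable_exp_mul_div_sqrt_sub hr hs.1).1.const_mul N) ?_ <;>
            filter_upwards [ae_restrict_mem measurableSet_Ioc] with u hu
          · exact div_nonneg (hnonneg u (hmem hu)) (sqrt_nonneg _)
          · rw [mul_div_assoc']
            exact div_le_div_of_nonneg_right (hN u (hmem hu)) (sqrt_nonneg _)
      _ = N * ∫ u in (0:ℝ)..s, exp (r * u) / √(s - u) := intervalIntegral.integral_const_mul _ _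
      _ ≤ N * (exp (r * s) * √(π / r)) := by
          gcongr; exact integral_exp_mul_div_sqrt_sub_le hr hs.1
  calc f s ≤ M * ∫ u in (0:ℝ)..s, f u / √(s - u) := hineq s hs
    _ ≤ M * (N * (exp (r * s) * √(π / r))) := by gcongr
    _ = M * √(π / r) * N * exp (r * s) := by ring

theorem le_pow_mul_exp_of_le_integral_div_sqrt {f : ℝ → ℝ} {a M C r : ℝ} (hM : 0 ≤ M)
    (hr : 0 < r) (hnonneg : ∀ s ∈ Icc 0 a, 0 ≤ f s)
    (hineq : ∀ s ∈ Icc 0 a, f s ≤ M * ∫ u in (0:ℝ)..s, f u / √(s - u))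
    (hC : ∀ s ∈ Icc 0 a, f s ≤ C) (k : ℕ) :
    ∀ s ∈ Icc 0 a, f s ≤ (M * √(π / r)) ^ k * max C 0 * exp (r * s) := by
  induction k with
  | zero =>
    intro s hs
    rw [pow_zero, one_mul]
    exact (hC s hs).trans <| (le_max_left C 0).trans <|
      le_mul_of_one_le_right (le_max_right C 0) (one_le_exp (by nlinarith [hs.1]))
  | succ k ih =>
    intro s hs
    exact (le_mul_exp_of_le_integral_div_sqrt hM hr hnonneg hineq ih s hs).trans_eq (by ring)

theorem fractional_gronwall_homogeneous_general (a M : ℝ) (hM : 0 ≤ M)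
    (f : ℝ → ℝ)
    (hnonneg : ∀ s ∈ Icc 0 a, 0 ≤ f s)
    (hbdd : ∃ C : ℝ, ∀ s ∈ Icc 0 a, f s ≤ C)
    (hineq : ∀ s ∈ Icc 0 a,
      f s ≤ M * ∫ u in (0:ℝ)..s, f u / Real.sqrt (s - u)) :
    ∀ s ∈ Icc 0 a, f s = 0 := by
  obtain ⟨C, hC⟩ := hbdd
  set r := π * (2 * (M + 1)) ^ 2 with hr_def
  have hr : 0 < r := by positivity
  have hq : M * √(π / r) < 1 := by
    rw [show π / r = ((2 * (M + 1))⁻¹) ^ 2 by rw [hr_def]; field_simp, sqrt_sq (by positivity),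
      mul_inv_lt_iff₀ (by positivity)]
    linarith
  intro s hs
  have hlim : Filter.Tendsto (fun k : ℕ => (M * √(π / r)) ^ k * max C 0 * exp (r * s))
      Filter.atTop (nhds 0) := by
    simpa using ((tendsto_pow_atTop_nhds_zero_of_lt_one (by positivity) hq).mul_const
      (max C 0)).mul_const (exp (r * s))
  exact le_antisymm (ge_of_tendsto' hlim fun k =>
    le_pow_mul_exp_of_le_integral_div_sqrt hM hr hnonneg hineq hC k s hs) (hnonneg s hs)

theorem fractional_gronwall_homogeneous (a M : ℝ) (ha : 0 < a) (hM : 0 ≤ M)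
    (f : ℝ → ℝ)
    (hmeas : Measurable f)
    (hnonneg : ∀ s ∈ Icc 0 a, 0 ≤ f s)
    (hbdd : ∃ C : ℝ, ∀ s ∈ Icc 0 a, f s ≤ C)
    (hineq : ∀ s ∈ Icc 0 a,
      f s ≤ M * ∫ u in (0:ℝ)..s, f u / Real.sqrt (s - u)) :
    ∀ s ∈ Icc 0 a, f s = 0 :=
  fractional_gronwall_homogeneous_general a M hM f hnonneg hbdd hineq
end

section
/- Let K > 0, n ≥ 1, θ_1, …, θ_n ≥ 0 and 0 ≤ t_1 < t_2 < ⋯ < t_n ≤ 1. Then there is at most one bounded measurable nonnegative function y : [0,1] → [0,∞) satisfying y(s) = Σ_{k=1}^n θ_k ∫_0^s 1_{[0,t_k]}(1−u)/√(2π(s−u)) du − K ∫_0^s y(u)²/√(2π(s−u)) du for all s ∈ [0,1]. -/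
/-!
The forcing term is common to both solutions, so it cancels in `y₁ - y₂`, and since
`0 ≤ yᵢ ≤ Cᵢ` we have `|y₁² - y₂²| ≤ (C₁ + C₂) |y₁ - y₂|`. Hence `d = |y₁ - y₂|` satisfies the
Abel-type inequality `d s ≤ L ∫₀ˢ d u (s - u)^(-1/2) du`. If `d` vanishes up to `a`, the kernel has
mass `2 √δ` on `[a, a + δ]`, so for `L · 2√δ ≤ 1/2` the inequality halves every bound of `d` on
`[0, a + δ]`; as `d` is bounded it vanishes there. Steps of length `δ` exhaust `[0, T]`.
-/

open MeasureTheory Set Real intervalIntegral Filter Topology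

lemma integral_sub_rpow_neg_half (a s : ℝ) :
    ∫ u in a..s, (s - u) ^ (-(1/2) : ℝ) = 2 * √(s - a) := by
  rw [integral_comp_sub_left (fun x => x ^ (-(1/2) : ℝ)) s, sub_self,
    integral_rpow (Or.inl (by norm_num)), sqrt_eq_rpow, zero_rpow (by norm_num)]
  ring_nf

lemma IntervalIntegrable.mul_sub_rpow_neg_half {f : ℝ → ℝ} {a b s B : ℝ}
    (hf : AEStronglyMeasurable f) (hab : a ≤ b) (hB : ∀ u ∈ Ioc a b, |f u| ≤ B) :
    IntervalIntegrable (fun u => f u * (s - u) ^ (-(1/2) : ℝ)) volume a b := by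
  have hker : IntervalIntegrable (fun u => (s - u) ^ (-(1/2) : ℝ)) volume a b := by
    simpa using (intervalIntegrable_rpow' (a := s - a) (b := s - b)
      (by norm_num : (-1 : ℝ) < -(1/2))).comp_sub_left s
  rw [intervalIntegrable_iff, uIoc_of_le hab] at hker ⊢
  exact hker.bdd_mul hf.restrict ((ae_restrict_mem measurableSet_Ioc).mono hB)

lemma integral_mul_sub_rpow_neg_half_le {f : ℝ → ℝ} {a s B : ℝ} (hf : Measurable f)
    (ha : 0 ≤ a) (has : a ≤ s) (hzero : ∀ u ∈ Icc 0 a, f u = 0)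
    (hB : ∀ u ∈ Icc a s, |f u| ≤ B) :
    ∫ u in 0..s, f u * (s - u) ^ (-(1/2) : ℝ) ≤ B * (2 * √(s - a)) := by
  have hint₀ : IntervalIntegrable (fun u => f u * (s - u) ^ (-(1/2) : ℝ)) volume 0 a :=
    .mul_sub_rpow_neg_half (B := 0) hf.aestronglyMeasurable ha fun u hu => by
      simp [hzero u (Ioc_subset_Icc_self hu)]
  have hint₁ : IntervalIntegrable (fun u => f u * (s - u) ^ (-(1/2) : ℝ)) volume a s :=
    .mul_sub_rpow_neg_half hf.aestronglyMeasurable has fun u hu => hB u (Ioc_subset_Icc_self hu)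
  have hvanish : ∫ u in 0..a, f u * (s - u) ^ (-(1/2) : ℝ) = 0 := by
    refine (integral_congr fun u hu => ?_).trans integral_zero
    rw [uIcc_of_le ha] at hu
    simp [hzero u hu]
  calc ∫ u in 0..s, f u * (s - u) ^ (-(1/2) : ℝ)
      = ∫ u in a..s, f u * (s - u) ^ (-(1/2) : ℝ) := by
        rw [← integral_add_adjacent_intervals hint₀ hint₁, hvanish, zero_add]
    _ ≤ ∫ u in a..s, B * (s - u) ^ (-(1/2) : ℝ) :=
        integral_mono_on has hint₁ (.mul_sub_rpow_neg_half (B := |B|) aestronglyMeasurable_const has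
          fun _ _ => le_rfl) fun u hu =>
            mul_le_mul_of_nonneg_right ((le_abs_self _).trans (hB u hu))
              (rpow_nonneg (sub_nonneg.2 hu.2) _)
    _ = B * (2 * √(s - a)) := by
        rw [intervalIntegral.integral_const_mul, integral_sub_rpow_neg_half]

lemma le_zero_of_forall_le_half {α : Type*} {S : Set α} {f : α → ℝ} {D : ℝ}
    (hD : ∀ x ∈ S, f x ≤ D) (hhalf : ∀ B, (∀ x ∈ S, f x ≤ B) → ∀ x ∈ S, f x ≤ B / 2) :
    ∀ x ∈ S, f x ≤ 0 := by
  have hpow : ∀ m : ℕ, ∀ x ∈ S, f x ≤ D / 2 ^ m := by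
    intro m
    induction m with
    | zero => simpa using hD
    | succ m ih => simpa [pow_succ, div_div] using hhalf _ ih
  have hlim : Tendsto (fun m : ℕ => D / 2 ^ m) atTop (𝓝 0) :=
    tendsto_const_nhds.div_atTop (tendsto_pow_atTop_atTop_of_one_lt one_lt_two)
  exact fun x hx => ge_of_tendsto' hlim fun m => hpow m x hx

section AbelInequality

variable {d : ℝ → ℝ} {T L D : ℝ}

lemma eqOn_zero_Iic_add_of_eqOn_zero_Iic (hd : Measurable d) (hnn : ∀ s ∈ Icc 0 T, 0 ≤ d s)
    (hbdd : ∀ s ∈ Icc 0 T, d s ≤ D) (hL : 0 ≤ L)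
    (h : ∀ s ∈ Icc 0 T, d s ≤ L * ∫ u in 0..s, d u * (s - u) ^ (-(1/2) : ℝ))
    {a δ : ℝ} (ha : 0 ≤ a) (hδ : L * (2 * √δ) ≤ 1 / 2) (hzero : EqOn d 0 (Icc 0 T ∩ Iic a)) :
    EqOn d 0 (Icc 0 T ∩ Iic (a + δ)) := by
  intro s hs
  refine le_antisymm ?_ (hnn s hs.1)
  refine le_zero_of_forall_le_half (fun x hx => hbdd x hx.1) (fun B hB x hx => ?_) s hs
  have hB0 : 0 ≤ B := (hnn x hx.1).trans (hB x hx)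
  rcases le_or_gt x a with hxa | hax
  · rw [hzero ⟨hx.1, hxa⟩]
    positivity
  have hint : ∫ u in 0..x, d u * (x - u) ^ (-(1/2) : ℝ) ≤ B * (2 * √(x - a)) :=
    integral_mul_sub_rpow_neg_half_le hd ha hax.le
      (fun u hu => hzero ⟨⟨hu.1, hu.2.trans (hax.le.trans hx.1.2)⟩, hu.2⟩)
      fun u hu => by
        have hu' : u ∈ Icc 0 T ∩ Iic (a + δ) :=
          ⟨⟨ha.trans hu.1, hu.2.trans hx.1.2⟩, hu.2.trans hx.2⟩
        rw [abs_of_nonneg (hnn u hu'.1)]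
        exact hB u hu'
  calc d x ≤ L * ∫ u in 0..x, d u * (x - u) ^ (-(1/2) : ℝ) := h x hx.1
    _ ≤ L * (B * (2 * √(x - a))) := mul_le_mul_of_nonneg_left hint hL
    _ ≤ L * (B * (2 * √δ)) := by
        gcongr
        linarith [mem_Iic.1 hx.2]
    _ = L * (2 * √δ) * B := by ring
    _ ≤ B / 2 := by nlinarith

theorem eqOn_zero_of_le_integral_mul_sub_rpow_neg_half (hd : Measurable d)
    (hnn : ∀ s ∈ Icc 0 T, 0 ≤ d s) (hbdd : ∀ s ∈ Icc 0 T, d s ≤ D) (hL : 0 ≤ L)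
    (h : ∀ s ∈ Icc 0 T, d s ≤ L * ∫ u in 0..s, d u * (s - u) ^ (-(1/2) : ℝ)) :
    EqOn d 0 (Icc 0 T) := by
  set δ : ℝ := (4 * L + 1)⁻¹ ^ 2
  have hδ : 0 < δ := by positivity
  have hcontr : L * (2 * √δ) ≤ 1 / 2 := by
    rw [sqrt_sq (by positivity)]
    field_simp
    linarith
  have hsteps : ∀ m : ℕ, EqOn d 0 (Icc 0 T ∩ Iic (m * δ)) := by
    intro m
    induction m with
    | zero =>
      rintro s ⟨hsT, hs0⟩
      obtain rfl : s = 0 := le_antisymm (by simpa using hs0) hsT.1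
      exact le_antisymm (by simpa using h 0 hsT) (hnn 0 hsT)
    | succ m ih =>
      rw [Nat.cast_succ, add_one_mul]
      exact eqOn_zero_Iic_add_of_eqOn_zero_Iic hd hnn hbdd hL h (by positivity) hcontr ih
  intro s hs
  obtain ⟨m, hm⟩ := exists_nat_ge (T / δ)
  exact hsteps m ⟨hs, hs.2.trans ((div_le_iff₀ hδ).1 hm)⟩

end AbelInequality

lemma abs_sub_le_add {x y C₁ C₂ : ℝ} (hx : 0 ≤ x) (hy : 0 ≤ y) (hxC : x ≤ C₁) (hyC : y ≤ C₂) :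
    |x - y| ≤ C₁ + C₂ :=
  abs_sub_le_iff.2 ⟨by linarith, by linarith⟩

lemma abs_sq_sub_sq_le {x y C₁ C₂ : ℝ} (hx : 0 ≤ x) (hy : 0 ≤ y) (hxC : x ≤ C₁) (hyC : y ≤ C₂) :
    |x ^ 2 - y ^ 2| ≤ (C₁ + C₂) * |x - y| := by
  rw [sq_sub_sq, abs_mul, abs_of_nonneg (add_nonneg hx hy)]
  exact mul_le_mul_of_nonneg_right (by linarith) (abs_nonneg _)

lemma div_sqrt_two_pi_mul {x : ℝ} (hx : 0 ≤ x) (a : ℝ) :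
    a / √(2 * π * x) = (√(2 * π))⁻¹ * (a * x ^ (-(1/2) : ℝ)) := by
  rw [sqrt_mul (by positivity), rpow_neg hx, ← sqrt_eq_rpow]
  ring

lemma integral_div_sqrt_two_pi_mul (f : ℝ → ℝ) {s : ℝ} (hs : 0 ≤ s) :
    ∫ u in 0..s, f u / √(2 * π * (s - u))
      = (√(2 * π))⁻¹ * ∫ u in 0..s, f u * (s - u) ^ (-(1/2) : ℝ) := by
  rw [← intervalIntegral.integral_const_mul]
  refine integral_congr fun u hu => div_sqrt_two_pi_mul ?_ _
  rw [uIcc_of_le hs] at hu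
  linarith [hu.2]

lemma abs_sub_le_integral_of_eq_sub_integral_sq {F y₁ y₂ : ℝ → ℝ} {K T C₁ C₂ : ℝ}
    (hmeas₁ : Measurable y₁) (hmeas₂ : Measurable y₂)
    (hnn₁ : ∀ s ∈ Icc 0 T, 0 ≤ y₁ s) (hnn₂ : ∀ s ∈ Icc 0 T, 0 ≤ y₂ s)
    (hC₁ : ∀ s ∈ Icc 0 T, y₁ s ≤ C₁) (hC₂ : ∀ s ∈ Icc 0 T, y₂ s ≤ C₂)
    (heq₁ : ∀ s ∈ Icc 0 T, y₁ s = F s - K * ∫ u in 0..s, y₁ u ^ 2 / √(2 * π * (s - u)))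
    (heq₂ : ∀ s ∈ Icc 0 T, y₂ s = F s - K * ∫ u in 0..s, y₂ u ^ 2 / √(2 * π * (s - u))) :
    ∀ s ∈ Icc 0 T, |y₁ s - y₂ s|
      ≤ |K| * (√(2 * π))⁻¹ * (C₁ + C₂) * ∫ u in 0..s, |y₁ u - y₂ u| * (s - u) ^ (-(1/2) : ℝ) := by
  intro s hs
  have hmem : ∀ u ∈ Ioc 0 s, u ∈ Icc 0 T := fun u hu => ⟨hu.1.le, hu.2.trans hs.2⟩
  have hint_sq : ∀ {y : ℝ → ℝ} {C : ℝ}, Measurable y → (∀ u ∈ Icc 0 T, 0 ≤ y u) →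
      (∀ u ∈ Icc 0 T, y u ≤ C) →
      IntervalIntegrable (fun u => y u ^ 2 * (s - u) ^ (-(1/2) : ℝ)) volume 0 s :=
    fun hy hnn hC => .mul_sub_rpow_neg_half (hy.pow_const 2).aestronglyMeasurable hs.1
      fun u hu => (abs_of_nonneg (sq_nonneg _)).trans_le
        (pow_le_pow_left₀ (hnn u (hmem u hu)) (hC u (hmem u hu)) 2)
  have hint_abs : IntervalIntegrable (fun u => |y₁ u - y₂ u| * (s - u) ^ (-(1/2) : ℝ)) volume 0 s :=
    .mul_sub_rpow_neg_half (hmeas₁.sub hmeas₂).abs.aestronglyMeasurable hs.1 fun u hu =>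
      (abs_abs _).trans_le (abs_sub_le_add (hnn₁ u (hmem u hu)) (hnn₂ u (hmem u hu))
        (hC₁ u (hmem u hu)) (hC₂ u (hmem u hu)))
  have hdiff : y₁ s - y₂ s = K * (√(2 * π))⁻¹ *
      ∫ u in 0..s, (y₂ u ^ 2 - y₁ u ^ 2) * (s - u) ^ (-(1/2) : ℝ) := by
    simp_rw [sub_mul]
    rw [integral_sub (hint_sq hmeas₂ hnn₂ hC₂) (hint_sq hmeas₁ hnn₁ hC₁), heq₁ s hs, heq₂ s hs,
      integral_div_sqrt_two_pi_mul _ hs.1, integral_div_sqrt_two_pi_mul _ hs.1]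
    ring
  have hbound : |∫ u in 0..s, (y₂ u ^ 2 - y₁ u ^ 2) * (s - u) ^ (-(1/2) : ℝ)|
      ≤ (C₁ + C₂) * ∫ u in 0..s, |y₁ u - y₂ u| * (s - u) ^ (-(1/2) : ℝ) := by
    rw [← norm_eq_abs, ← intervalIntegral.integral_const_mul]
    refine norm_integral_le_of_norm_le hs.1 (ae_of_all _ fun u hu => ?_) (hint_abs.const_mul _)
    have hk : 0 ≤ (s - u) ^ (-(1/2) : ℝ) := rpow_nonneg (sub_nonneg.2 hu.2) _
    rw [norm_mul, norm_of_nonneg hk, norm_eq_abs, abs_sub_comm, ← mul_assoc]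
    exact mul_le_mul_of_nonneg_right (abs_sq_sub_sq_le (hnn₁ u (hmem u hu))
      (hnn₂ u (hmem u hu)) (hC₁ u (hmem u hu)) (hC₂ u (hmem u hu))) hk
  rw [hdiff, abs_mul, abs_mul, abs_of_pos (inv_pos.2 (sqrt_pos.2 (by positivity))),
    mul_assoc _ (C₁ + C₂)]
  exact mul_le_mul_of_nonneg_left hbound (by positivity)

theorem uniqueness_fractional_integral_equation_general
    (K : ℝ) (n : ℕ)
    (θ t : Fin n → ℝ)
    (y₁ y₂ : ℝ → ℝ)
    (hmeas₁ : Measurable y₁) (hmeas₂ : Measurable y₂)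
    (hnn₁ : ∀ s ∈ Icc (0:ℝ) 1, 0 ≤ y₁ s) (hnn₂ : ∀ s ∈ Icc (0:ℝ) 1, 0 ≤ y₂ s)
    (hbdd₁ : ∃ C : ℝ, ∀ s ∈ Icc (0:ℝ) 1, y₁ s ≤ C)
    (hbdd₂ : ∃ C : ℝ, ∀ s ∈ Icc (0:ℝ) 1, y₂ s ≤ C)
    (heq₁ : ∀ s ∈ Icc (0:ℝ) 1,
      y₁ s = (∑ k, θ k * ∫ u in (0:ℝ)..s,
          Set.indicator (Set.Icc (0:ℝ) (t k)) (fun _ => (1:ℝ)) (1 - u)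
            / Real.sqrt (2 * Real.pi * (s - u)))
        - K * ∫ u in (0:ℝ)..s, (y₁ u) ^ 2 / Real.sqrt (2 * Real.pi * (s - u)))
    (heq₂ : ∀ s ∈ Icc (0:ℝ) 1,
      y₂ s = (∑ k, θ k * ∫ u in (0:ℝ)..s,
          Set.indicator (Set.Icc (0:ℝ) (t k)) (fun _ => (1:ℝ)) (1 - u)
            / Real.sqrt (2 * Real.pi * (s - u)))
        - K * ∫ u in (0:ℝ)..s, (y₂ u) ^ 2 / Real.sqrt (2 * Real.pi * (s - u))) :
    ∀ s ∈ Icc (0:ℝ) 1, y₁ s = y₂ s := by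
  obtain ⟨C₁, hC₁⟩ := hbdd₁
  obtain ⟨C₂, hC₂⟩ := hbdd₂
  have h0 : (0 : ℝ) ∈ Icc (0 : ℝ) 1 := left_mem_Icc.2 zero_le_one
  have hC : 0 ≤ C₁ + C₂ := by linarith [hnn₁ 0 h0, hC₁ 0 h0, hnn₂ 0 h0, hC₂ 0 h0]
  have hzero : EqOn (fun s => |y₁ s - y₂ s|) 0 (Icc 0 1) :=
    eqOn_zero_of_le_integral_mul_sub_rpow_neg_half (D := C₁ + C₂) (hmeas₁.sub hmeas₂).abs
      (fun _ _ => abs_nonneg _)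
      (fun s hs => abs_sub_le_add (hnn₁ s hs) (hnn₂ s hs) (hC₁ s hs) (hC₂ s hs))
      (by positivity)
      (abs_sub_le_integral_of_eq_sub_integral_sq hmeas₁ hmeas₂ hnn₁ hnn₂ hC₁ hC₂ heq₁ heq₂)
  exact fun s hs => sub_eq_zero.1 (abs_eq_zero.1 (hzero hs))

theorem uniqueness_fractional_integral_equation
    (K : ℝ) (hK : 0 < K) (n : ℕ) (hn : 1 ≤ n)
    (θ t : Fin n → ℝ) (hθ : ∀ k, 0 ≤ θ k)
    (ht0 : ∀ k, 0 ≤ t k) (ht1 : ∀ k, t k ≤ 1) (htmono : StrictMono t)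
    (y₁ y₂ : ℝ → ℝ)
    (hmeas₁ : Measurable y₁) (hmeas₂ : Measurable y₂)
    (hnn₁ : ∀ s ∈ Icc (0:ℝ) 1, 0 ≤ y₁ s) (hnn₂ : ∀ s ∈ Icc (0:ℝ) 1, 0 ≤ y₂ s)
    (hbdd₁ : ∃ C : ℝ, ∀ s ∈ Icc (0:ℝ) 1, y₁ s ≤ C)
    (hbdd₂ : ∃ C : ℝ, ∀ s ∈ Icc (0:ℝ) 1, y₂ s ≤ C)
    (heq₁ : ∀ s ∈ Icc (0:ℝ) 1,
      y₁ s = (∑ k, θ k * ∫ u in (0:ℝ)..s,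
          Set.indicator (Set.Icc (0:ℝ) (t k)) (fun _ => (1:ℝ)) (1 - u)
            / Real.sqrt (2 * Real.pi * (s - u)))
        - K * ∫ u in (0:ℝ)..s, (y₁ u) ^ 2 / Real.sqrt (2 * Real.pi * (s - u)))
    (heq₂ : ∀ s ∈ Icc (0:ℝ) 1,
      y₂ s = (∑ k, θ k * ∫ u in (0:ℝ)..s,
          Set.indicator (Set.Icc (0:ℝ) (t k)) (fun _ => (1:ℝ)) (1 - u)
            / Real.sqrt (2 * Real.pi * (s - u)))
        - K * ∫ u in (0:ℝ)..s, (y₂ u) ^ 2 / Real.sqrt (2 * Real.pi * (s - u))) :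
    ∀ s ∈ Icc (0:ℝ) 1, y₁ s = y₂ s :=
  uniqueness_fractional_integral_equation_general K n θ t y₁ y₂ hmeas₁ hmeas₂ hnn₁ hnn₂ hbdd₁ hbdd₂
    heq₁ heq₂
end

section
/- Let K > 0 and θ > 0. Let Λ : [0,1] → [0,∞) be continuous on [0,1], continuously differentiable on (0,1), nonnegative and nondecreasing, and satisfy Λ(s) = θ√(2s/π) − K ∫_0^s Λ(u)²/√(2π(s−u)) du for all s ∈ [0,1]. Then Λ(s) ≤ √(θ/K) for all s ∈ [0,1]. -/
open MeasureTheory Set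

/-!
Rewriting the equation as `Λ(s) = ∫₀ˢ (θ - KΛ(u)²) / √(2π(s-u)) du`, the level `c = √(θ/K)` is
where the integrand changes sign. If `Λ(s) ≥ c`, pick `t ≤ s` with `Λ(t) = c`; by monotonicity
the integrand is `≥ 0` before `t` and `≤ 0` after it. Dropping the part after `t` and using that
the kernel `1/√(2π(s-u))` decreases in `s` gives `Λ(s) ≤ Λ(t) = c`.
-/

lemma inv_sqrt_mul_sub_eq {a t u : ℝ} (ha : 0 ≤ a) (hu : u ≤ t) :
    (√(a * (t - u)))⁻¹ = (√a)⁻¹ * (t - u) ^ (-(1 / 2) : ℝ) := by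
  rw [Real.sqrt_mul ha, mul_inv, Real.rpow_neg (sub_nonneg.2 hu), ← Real.sqrt_eq_rpow]

lemma intervalIntegrable_inv_sqrt_mul_sub {a t x y : ℝ} (ha : 0 ≤ a) (hx : x ≤ t) (hy : y ≤ t) :
    IntervalIntegrable (fun u => (√(a * (t - u)))⁻¹) volume x y := by
  have hrpow : IntervalIntegrable (fun u => (√a)⁻¹ * (t - u) ^ (-(1 / 2) : ℝ)) volume x y := by
    simpa only [sub_sub_cancel] using
      ((intervalIntegral.intervalIntegrable_rpow' (r := -(1 / 2)) (a := t - x) (b := t - y)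
        (by norm_num)).comp_sub_left t).const_mul (√a)⁻¹
  rw [intervalIntegrable_iff] at hrpow ⊢
  refine hrpow.congr_fun (fun u hu => (inv_sqrt_mul_sub_eq ha ?_).symm) measurableSet_uIoc
  rcases mem_uIoc.1 hu with h | h
  exacts [h.2.trans hy, h.2.trans hx]

lemma ContinuousOn.intervalIntegrable_div_sqrt_mul_sub {φ : ℝ → ℝ} {a t x y : ℝ} (ha : 0 ≤ a)
    (hx : x ≤ t) (hy : y ≤ t) (hφ : ContinuousOn φ (uIcc x y)) :
    IntervalIntegrable (fun u => φ u / √(a * (t - u))) volume x y := by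
  simpa only [div_eq_mul_inv] using
    (intervalIntegrable_inv_sqrt_mul_sub ha hx hy).continuousOn_mul hφ

lemma integral_div_sqrt_two_pi_mul_sub (θ : ℝ) {t : ℝ} (ht : 0 ≤ t) :
    ∫ u in (0 : ℝ)..t, θ / √(2 * Real.pi * (t - u)) = θ * √(2 * t / Real.pi) := by
  have hπ : 0 ≤ 2 * Real.pi := by positivity
  simp only [div_eq_mul_inv θ]
  rw [intervalIntegral.integral_const_mul, intervalIntegral.integral_congr
      (g := fun u => (√(2 * Real.pi))⁻¹ * (t - u) ^ (-(1 / 2) : ℝ))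
      (fun u hu => inv_sqrt_mul_sub_eq hπ (by rw [uIcc_of_le ht] at hu; exact hu.2)),
    intervalIntegral.integral_const_mul,
    intervalIntegral.integral_comp_sub_left (fun x : ℝ => x ^ (-(1 / 2) : ℝ)), sub_self, sub_zero,
    integral_rpow (Or.inl (by norm_num)), show (-(1 / 2) : ℝ) + 1 = 1 / 2 by norm_num,
    Real.zero_rpow (by norm_num), ← Real.sqrt_eq_rpow, sub_zero, Real.sqrt_div' _ (by positivity),
    Real.sqrt_mul (by norm_num), Real.sqrt_mul (by norm_num)]
  have h2 : √2 ^ 2 = 2 := Real.sq_sqrt (by norm_num)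
  have hπ' : 0 < √Real.pi := Real.sqrt_pos.2 Real.pi_pos
  field_simp
  linear_combination -θ * √t * h2

lemma sub_mul_integral_div_sqrt_two_pi_mul_sub {φ : ℝ → ℝ} {t : ℝ} (θ K : ℝ) (ht : 0 ≤ t)
    (hφ : ContinuousOn φ (Icc 0 t)) :
    θ * √(2 * t / Real.pi) - K * ∫ u in (0 : ℝ)..t, φ u / √(2 * Real.pi * (t - u))
      = ∫ u in (0 : ℝ)..t, (θ - K * φ u) / √(2 * Real.pi * (t - u)) := by
  have hπ : 0 ≤ 2 * Real.pi := by positivity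
  have hφ' : ContinuousOn φ (uIcc 0 t) := by rwa [uIcc_of_le ht]
  simp only [sub_div]
  rw [intervalIntegral.integral_sub, integral_div_sqrt_two_pi_mul_sub θ ht,
    ← intervalIntegral.integral_const_mul]
  · simp only [mul_div_assoc]
  · exact continuousOn_const.intervalIntegrable_div_sqrt_mul_sub hπ ht le_rfl
  · exact (hφ'.const_smul K).intervalIntegrable_div_sqrt_mul_sub hπ ht le_rfl

lemma integral_div_sqrt_mul_sub_le_of_sign_change {φ : ℝ → ℝ} {a t s : ℝ} (ha : 0 < a)
    (ht : 0 ≤ t) (hts : t ≤ s) (hφ : ContinuousOn φ (Icc 0 s))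
    (hpos : ∀ u ∈ Icc 0 t, 0 ≤ φ u) (hneg : ∀ u ∈ Icc t s, φ u ≤ 0) :
    ∫ u in (0 : ℝ)..s, φ u / √(a * (s - u)) ≤ ∫ u in (0 : ℝ)..t, φ u / √(a * (t - u)) := by
  have hφ₁ : ContinuousOn φ (uIcc 0 t) :=
    hφ.mono (by rw [uIcc_of_le ht]; exact Icc_subset_Icc_right hts)
  have hφ₂ : ContinuousOn φ (uIcc t s) :=
    hφ.mono (by rw [uIcc_of_le hts]; exact Icc_subset_Icc_left ht)
  have hleft_s := hφ₁.intervalIntegrable_div_sqrt_mul_sub ha.le (ht.trans hts) hts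
  have hleft_t := hφ₁.intervalIntegrable_div_sqrt_mul_sub ha.le ht le_rfl
  have hright := hφ₂.intervalIntegrable_div_sqrt_mul_sub ha.le hts le_rfl
  have hkernel_anti : ∀ u ∈ Ioo 0 t, φ u / √(a * (s - u)) ≤ φ u / √(a * (t - u)) :=
    fun u hu => div_le_div_of_nonneg_left (hpos u (Ioo_subset_Icc_self hu))
      (Real.sqrt_pos.2 (mul_pos ha (sub_pos.2 hu.2)))
      (Real.sqrt_le_sqrt (by nlinarith [hu.2]))
  have htail : ∫ u in t..s, φ u / √(a * (s - u)) ≤ 0 := by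
    simpa using intervalIntegral.integral_mono_on hts hright intervalIntegrable_const
      fun u hu => div_nonpos_of_nonpos_of_nonneg (hneg u hu) (Real.sqrt_nonneg _)
  rw [← intervalIntegral.integral_add_adjacent_intervals hleft_s hright]
  linarith [intervalIntegral.integral_mono_on_of_le_Ioo ht hleft_s hleft_t hkernel_anti]

lemma sub_mul_sq_nonneg_of_le_sqrt {K θ x : ℝ} (hK : 0 < K) (hθ : 0 ≤ θ) (hx : 0 ≤ x)
    (h : x ≤ √(θ / K)) : 0 ≤ θ - K * x ^ 2 := by
  have hsq := pow_le_pow_left₀ hx h 2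
  rw [Real.sq_sqrt (div_nonneg hθ hK.le), le_div_iff₀ hK] at hsq
  linarith

lemma sub_mul_sq_nonpos_of_sqrt_le {K θ x : ℝ} (hK : 0 < K) (hθ : 0 ≤ θ)
    (h : √(θ / K) ≤ x) : θ - K * x ^ 2 ≤ 0 := by
  have hsq := pow_le_pow_left₀ (Real.sqrt_nonneg _) h 2
  rw [Real.sq_sqrt (div_nonneg hθ hK.le), div_le_iff₀ hK] at hsq
  linarith

theorem lambda_bound_general (K θ : ℝ) (hK : 0 < K) (hθ : 0 < θ) (Λ : ℝ → ℝ)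
    (hcont : ContinuousOn Λ (Icc 0 1))
    (hmono : MonotoneOn Λ (Icc 0 1))
    (heq : ∀ s ∈ Icc (0:ℝ) 1,
      Λ s = θ * Real.sqrt (2 * s / Real.pi)
        - K * ∫ u in (0:ℝ)..s, (Λ u) ^ 2 / Real.sqrt (2 * Real.pi * (s - u))) :
    ∀ s ∈ Icc (0:ℝ) 1, Λ s ≤ Real.sqrt (θ / K) := by
  intro s hs
  have hsub : Icc 0 s ⊆ Icc 0 1 := Icc_subset_Icc_right hs.2
  have hΛmono := hmono.mono hsub
  have hΛ0 : Λ 0 = 0 := by simpa using heq 0 (left_mem_Icc.2 zero_le_one)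
  have hΛ_eq_integral : ∀ t ∈ Icc 0 s,
      Λ t = ∫ u in (0 : ℝ)..t, (θ - K * Λ u ^ 2) / √(2 * Real.pi * (t - u)) := fun t ht => by
    rw [heq t (hsub ht)]
    exact sub_mul_integral_div_sqrt_two_pi_mul_sub (φ := fun u => Λ u ^ 2) θ K ht.1
      ((hcont.mono (Icc_subset_Icc_right (ht.2.trans hs.2))).pow 2)
  rcases le_total (Λ s) √(θ / K) with h | h
  · exact h
  obtain ⟨t, ht, hΛt⟩ := intermediate_value_Icc hs.1 (hcont.mono hsub)
    ⟨by rw [hΛ0]; exact Real.sqrt_nonneg _, h⟩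
  calc Λ s = ∫ u in (0 : ℝ)..s, (θ - K * Λ u ^ 2) / √(2 * Real.pi * (s - u)) :=
        hΛ_eq_integral s (right_mem_Icc.2 hs.1)
    _ ≤ ∫ u in (0 : ℝ)..t, (θ - K * Λ u ^ 2) / √(2 * Real.pi * (t - u)) :=
        integral_div_sqrt_mul_sub_le_of_sign_change (by positivity) ht.1 ht.2
          (continuousOn_const.sub (((hcont.mono hsub).pow 2).const_smul K))
          (fun u hu => sub_mul_sq_nonneg_of_le_sqrt hK hθ.le
            (hΛ0 ▸ hΛmono (left_mem_Icc.2 hs.1) ⟨hu.1, hu.2.trans ht.2⟩ hu.1)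
            (hΛt ▸ hΛmono ⟨hu.1, hu.2.trans ht.2⟩ ht hu.2))
          (fun u hu => sub_mul_sq_nonpos_of_sqrt_le hK hθ.le
            (hΛt ▸ hΛmono ht ⟨ht.1.trans hu.1, hu.2⟩ hu.1))
    _ = √(θ / K) := (hΛ_eq_integral t ht).symm.trans hΛt

theorem lambda_bound (K θ : ℝ) (hK : 0 < K) (hθ : 0 < θ) (Λ Λ' : ℝ → ℝ)
    (hcont : ContinuousOn Λ (Icc 0 1))
    (hderiv : ∀ s ∈ Ioo (0:ℝ) 1, HasDerivAt Λ (Λ' s) s)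
    (hderivcont : ContinuousOn Λ' (Ioo 0 1))
    (hnn : ∀ s ∈ Icc (0:ℝ) 1, 0 ≤ Λ s)
    (hmono : MonotoneOn Λ (Icc 0 1))
    (heq : ∀ s ∈ Icc (0:ℝ) 1,
      Λ s = θ * Real.sqrt (2 * s / Real.pi)
        - K * ∫ u in (0:ℝ)..s, (Λ u) ^ 2 / Real.sqrt (2 * Real.pi * (s - u))) :
    ∀ s ∈ Icc (0:ℝ) 1, Λ s ≤ Real.sqrt (θ / K) :=
  lambda_bound_general K θ hK hθ Λ hcont hmono heq
end

section
/- Let K > 0, let ν be a (Borel) measure on (0,∞) with ∫_0^∞ x ν(dx) < ∞, and let h : [0,∞) → [0,∞) satisfy both h(t) = √(2t/π) − K ∫_0^t h(u)²/√(2π(t−u)) du for all t ≥ 0 and K h(θ)² = 1 − ∫_0^∞ x e^{−θx} ν(dx) for all θ > 0. Then h(t) = (1/√(2πt)) ∫_0^∞ Q(tx) ν(dx) for all t > 0, where Q(w) = √w e^{−w} ∫_0^w e^y/√y dy. -/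
/-!
Since `√(2t/π) = ∫₀ᵗ du / √(2π(t - u))`, substituting `K h(u)² = 1 - ∫ x e^{-ux} ν(dx)` into the
Volterra equation gives `h(t) = ∫₀ᵗ (∫ x e^{-ux} ν(dx)) du / √(2π(t - u))`. The integrand is dominated
by `x / √(2π(t - u))`, which is integrable because `∫ x ν(dx) < ∞` (this also makes `ν` σ-finite on
`(0, ∞)`), so Fubini applies; the substitutions `θ = t - u` and `y = xθ` turn the inner integral
`x ∫₀ᵗ e^{-ux} du / √(2π(t - u))` into `Q(tx) / √(2πt)`.
-/

open MeasureTheory Set Filter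

noncomputable def Q (w : ℝ) : ℝ :=
  Real.sqrt w * Real.exp (-w) * ∫ y in (0:ℝ)..w, Real.exp y / Real.sqrt y

namespace Real

lemma inv_sqrt_eq_rpow_neg_half (y : ℝ) : (√y)⁻¹ = y ^ (-(1 / 2) : ℝ) := by
  rcases le_or_gt 0 y with hy | hy
  · rw [sqrt_eq_rpow, ← rpow_neg hy]
  · rw [sqrt_eq_zero'.mpr hy.le, inv_zero, rpow_def_of_neg hy,
      show -(1 / 2) * π = -(π / 2) by ring, cos_neg, cos_pi_div_two, mul_zero]

lemma inv_sqrt_two_pi_mul (y : ℝ) : (√(2 * π * y))⁻¹ = (√(2 * π))⁻¹ * y ^ (-(1 / 2) : ℝ) := by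
  rw [sqrt_mul (by positivity), mul_inv, inv_sqrt_eq_rpow_neg_half y]

lemma intervalIntegrable_inv_sqrt_two_pi_mul_sub (t : ℝ) :
    IntervalIntegrable (fun u => (√(2 * π * (t - u)))⁻¹) volume 0 t := by
  simp only [inv_sqrt_two_pi_mul]
  simpa using ((intervalIntegral.intervalIntegrable_rpow' (r := -(1 / 2)) (by norm_num)
    (a := t) (b := 0)).comp_sub_left t).const_mul (√(2 * π))⁻¹

lemma integral_inv_sqrt_two_pi_mul_sub (t : ℝ) :
    ∫ u in (0:ℝ)..t, (√(2 * π * (t - u)))⁻¹ = √(2 * t / π) := by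
  simp only [inv_sqrt_two_pi_mul, intervalIntegral.integral_const_mul,
    intervalIntegral.integral_comp_sub_left (fun y => y ^ (-(1 / 2) : ℝ)), sub_self, sub_zero]
  rw [integral_rpow (Or.inl (by norm_num)), zero_rpow (by norm_num),
    show (-(1 / 2) : ℝ) + 1 = 1 / 2 by norm_num, ← sqrt_eq_rpow, sqrt_div' _ pi_pos.le,
    sqrt_mul zero_le_two, sqrt_mul zero_le_two]
  have h2 : √2 ^ 2 = 2 := sq_sqrt zero_le_two
  field_simp
  linear_combination (-√t) * h2

lemma integral_exp_mul_div_sqrt {x : ℝ} (hx : 0 < x) (t : ℝ) :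
    ∫ θ in (0:ℝ)..t, exp (x * θ) / √θ = (√x)⁻¹ * ∫ y in (0:ℝ)..x * t, exp y / √y := by
  have hsub := intervalIntegral.integral_comp_mul_left (fun y => exp y / √y) hx.ne' (a := 0)
    (b := t)
  rw [mul_zero] at hsub
  calc ∫ θ in (0:ℝ)..t, exp (x * θ) / √θ = ∫ θ in (0:ℝ)..t, √x * (exp (x * θ) / √(x * θ)) := by
        refine intervalIntegral.integral_congr fun θ _ => ?_
        rw [sqrt_mul hx.le]
        rcases eq_or_ne (√θ) 0 with h0 | h0
        · simp [h0]
        · field_simp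
    _ = (√x)⁻¹ * ∫ y in (0:ℝ)..x * t, exp y / √y := by
        rw [intervalIntegral.integral_const_mul, hsub, smul_eq_mul, ← mul_assoc]
        congr 1
        field_simp
        exact sq_sqrt hx.le

lemma integral_mul_exp_mul_inv_sqrt_two_pi_mul_sub {t x : ℝ} (ht : 0 ≤ t) (hx : 0 < x) :
    ∫ u in (0:ℝ)..t, x * exp (-(u * x)) * (√(2 * π * (t - u)))⁻¹
      = Q (t * x) * (√(2 * π * t))⁻¹ := by
  have hsub := intervalIntegral.integral_comp_sub_left
    (fun u => x * exp (-(u * x)) * (√(2 * π * (t - u)))⁻¹) t (a := 0) (b := t)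
  simp only [sub_self, sub_zero, sub_sub_cancel] at hsub
  calc ∫ u in (0:ℝ)..t, x * exp (-(u * x)) * (√(2 * π * (t - u)))⁻¹
      = ∫ θ in (0:ℝ)..t, x * exp (-(t * x)) * (√(2 * π))⁻¹ * (exp (x * θ) / √θ) := by
        rw [← hsub]
        refine intervalIntegral.integral_congr fun θ _ => ?_
        rw [show -((t - θ) * x) = -(t * x) + x * θ by ring, exp_add, sqrt_mul (by positivity),
          mul_inv]
        ring
    _ = Q (t * x) * (√(2 * π * t))⁻¹ := by
        rw [intervalIntegral.integral_const_mul, integral_exp_mul_div_sqrt hx, Q,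
          mul_comm x t, sqrt_mul ht, sqrt_mul' _ ht]
        rcases ht.eq_or_lt with rfl | ht'
        · simp
        · have : 0 < √t := sqrt_pos.2 ht'
          field_simp
          rw [sq_sqrt hx.le]

end Real

namespace MeasureTheory

theorem sigmaFinite_of_integrable {α E : Type*} [MeasurableSpace α] [NormedAddCommGroup E]
    {μ : Measure α} {f : α → E} (hf : Integrable f μ) (hf0 : μ {x | f x = 0} = 0) :
    SigmaFinite μ := by
  refine Measure.sigmaFinite_of_countable
    (S := insert {x | f x = 0} (range fun n : ℕ => {x | 1 / ((n : ℝ) + 1) ≤ ‖f x‖}))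
    ((countable_range _).insert _) ?_ ?_
  · rintro s (rfl | ⟨n, rfl⟩)
    · simp [hf0]
    · exact hf.measure_norm_ge_lt_top (by positivity)
  · refine eq_univ_of_forall fun x => ?_
    by_cases hx : f x = 0
    · exact mem_sUnion_of_mem hx (mem_insert _ _)
    · obtain ⟨n, hn⟩ := exists_nat_one_div_lt (norm_pos_iff.2 hx)
      exact mem_sUnion_of_mem hn.le (mem_insert_of_mem _ ⟨n, rfl⟩)

end MeasureTheory

open Real

lemma integrableOn_Ioi_id_of_setLIntegral_ofReal_lt_top {ν : Measure ℝ}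
    (h : ∫⁻ x in Ioi 0, ENNReal.ofReal x ∂ν < ⊤) : IntegrableOn (fun x => x) (Ioi 0) ν :=
  ⟨measurable_id.aestronglyMeasurable, (hasFiniteIntegral_iff_ofReal
    (ae_restrict_of_forall_mem measurableSet_Ioi fun _ hx => le_of_lt hx)).2 h⟩

lemma sigmaFinite_restrict_Ioi_of_integrableOn_id {ν : Measure ℝ}
    (h : IntegrableOn (fun x => x) (Ioi 0) ν) : SigmaFinite (ν.restrict (Ioi 0)) :=
  sigmaFinite_of_integrable h (by simp [Measure.restrict_apply' measurableSet_Ioi])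

section Fubini

variable {μ : Measure ℝ} {t : ℝ}

lemma integrable_mul_exp_mul_inv_sqrt_prod (hμ : Integrable (fun x => x) μ)
    (hpos : ∀ᵐ x ∂μ, 0 < x) :
    Integrable (Function.uncurry fun u x => x * exp (-(u * x)) * (√(2 * π * (t - u)))⁻¹)
      ((volume.restrict (Ioc 0 t)).prod μ) := by
  have hdom : Integrable (fun z : ℝ × ℝ => (√(2 * π * (t - z.1)))⁻¹ * z.2)
      ((volume.restrict (Ioc 0 t)).prod μ) :=
    ((intervalIntegrable_inv_sqrt_two_pi_mul_sub t).def'.mono_set Ioc_subset_uIoc).mul_prod hμ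
  refine hdom.mono (by fun_prop) ?_
  filter_upwards [Measure.quasiMeasurePreserving_fst.ae (ae_restrict_mem measurableSet_Ioc),
    Measure.quasiMeasurePreserving_snd.ae hpos] with ⟨u, x⟩ hu hx
  have hexp : exp (-(u * x)) ≤ 1 := exp_le_one_iff.2 (by nlinarith [hu.1])
  simp only [Function.uncurry_apply_pair, norm_mul, Real.norm_of_nonneg hx.le,
    Real.norm_of_nonneg (exp_pos _).le]
  calc x * exp (-(u * x)) * ‖(√(2 * π * (t - u)))⁻¹‖
      ≤ x * 1 * ‖(√(2 * π * (t - u)))⁻¹‖ := by gcongr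
    _ = ‖(√(2 * π * (t - u)))⁻¹‖ * x := by ring

lemma intervalIntegrable_integral_mul_exp_mul_inv_sqrt [SFinite μ] (ht : 0 ≤ t)
    (hμ : Integrable (fun x => x) μ) (hpos : ∀ᵐ x ∂μ, 0 < x) :
    IntervalIntegrable (fun u => (∫ x, x * exp (-(u * x)) ∂μ) * (√(2 * π * (t - u)))⁻¹)
      volume 0 t := by
  rw [intervalIntegrable_iff_integrableOn_Ioc_of_le ht, IntegrableOn]
  simpa only [Function.uncurry_apply_pair, ← integral_mul_const] using
    (integrable_mul_exp_mul_inv_sqrt_prod hμ hpos).integral_prod_left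

lemma integral_integral_mul_exp_mul_inv_sqrt [SFinite μ] (ht : 0 ≤ t)
    (hμ : Integrable (fun x => x) μ) (hpos : ∀ᵐ x ∂μ, 0 < x) :
    ∫ u in (0:ℝ)..t, (∫ x, x * exp (-(u * x)) ∂μ) * (√(2 * π * (t - u)))⁻¹
      = (√(2 * π * t))⁻¹ * ∫ x, Q (t * x) ∂μ := by
  simp only [intervalIntegral.integral_of_le ht, ← integral_mul_const]
  rw [integral_integral_swap (integrable_mul_exp_mul_inv_sqrt_prod hμ hpos),
    ← integral_const_mul]
  refine integral_congr_ae (hpos.mono fun x hx => ?_)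
  dsimp only
  rw [← intervalIntegral.integral_of_le ht, integral_mul_exp_mul_inv_sqrt_two_pi_mul_sub ht hx,
    mul_comm]

end Fubini

lemma eq_integral_mul_inv_sqrt_two_pi_mul_sub_of_volterra {K t : ℝ} {h g : ℝ → ℝ} (ht : 0 ≤ t)
    (hg : IntervalIntegrable (fun u => g u * (√(2 * π * (t - u)))⁻¹) volume 0 t)
    (heq1 : h t = √(2 * t / π) - K * ∫ u in (0:ℝ)..t, h u ^ 2 / √(2 * π * (t - u)))
    (heq2 : ∀ θ ∈ Ioc 0 t, K * h θ ^ 2 = 1 - g θ) :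
    h t = ∫ u in (0:ℝ)..t, g u * (√(2 * π * (t - u)))⁻¹ := by
  have hsubst : K * ∫ u in (0:ℝ)..t, h u ^ 2 / √(2 * π * (t - u))
      = ∫ u in (0:ℝ)..t, ((√(2 * π * (t - u)))⁻¹ - g u * (√(2 * π * (t - u)))⁻¹) := by
    rw [← intervalIntegral.integral_const_mul]
    refine intervalIntegral.integral_congr_ae (Eventually.of_forall fun u hu => ?_)
    rw [uIoc_of_le ht] at hu
    rw [div_eq_mul_inv, ← mul_assoc, heq2 u hu]
    ring
  rw [heq1, hsubst, intervalIntegral.integral_sub (intervalIntegrable_inv_sqrt_two_pi_mul_sub t) hg,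
    integral_inv_sqrt_two_pi_mul_sub]
  ring

theorem levy_measure_representation_general (K : ℝ)
    (ν : Measure ℝ)
    (hmom : ∫⁻ x in Ioi (0:ℝ), ENNReal.ofReal x ∂ν < ⊤)
    (h : ℝ → ℝ)
    (heq1 : ∀ t : ℝ, 0 ≤ t →
      h t = Real.sqrt (2 * t / Real.pi)
        - K * ∫ u in (0:ℝ)..t, (h u) ^ 2 / Real.sqrt (2 * Real.pi * (t - u)))
    (heq2 : ∀ θ : ℝ, 0 < θ →
      K * (h θ) ^ 2 = 1 - ∫ x in Ioi (0:ℝ), x * Real.exp (-(θ * x)) ∂ν) :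
    ∀ t : ℝ, 0 < t →
      h t = (1 / Real.sqrt (2 * Real.pi * t)) * ∫ x in Ioi (0:ℝ), Q (t * x) ∂ν := by
  intro t ht
  have hμ := integrableOn_Ioi_id_of_setLIntegral_ofReal_lt_top hmom
  have := sigmaFinite_restrict_Ioi_of_integrableOn_id hμ
  have hpos : ∀ᵐ x ∂ν.restrict (Ioi 0), 0 < x := ae_restrict_mem measurableSet_Ioi
  rw [eq_integral_mul_inv_sqrt_two_pi_mul_sub_of_volterra ht.le
    (intervalIntegrable_integral_mul_exp_mul_inv_sqrt ht.le hμ hpos) (heq1 t ht.le)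
    (fun θ hθ => heq2 θ hθ.1), integral_integral_mul_exp_mul_inv_sqrt ht.le hμ hpos, one_div]

theorem levy_measure_representation (K : ℝ) (hK : 0 < K)
    (ν : Measure ℝ) (hν : ν (Iic 0) = 0)
    (hmom : ∫⁻ x in Ioi (0:ℝ), ENNReal.ofReal x ∂ν < ⊤)
    (h : ℝ → ℝ) (hnn : ∀ t : ℝ, 0 ≤ t → 0 ≤ h t)
    (heq1 : ∀ t : ℝ, 0 ≤ t →
      h t = Real.sqrt (2 * t / Real.pi)
        - K * ∫ u in (0:ℝ)..t, (h u) ^ 2 / Real.sqrt (2 * Real.pi * (t - u)))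
    (heq2 : ∀ θ : ℝ, 0 < θ →
      K * (h θ) ^ 2 = 1 - ∫ x in Ioi (0:ℝ), x * Real.exp (-(θ * x)) ∂ν) :
    ∀ t : ℝ, 0 < t →
      h t = (1 / Real.sqrt (2 * Real.pi * t)) * ∫ x in Ioi (0:ℝ), Q (t * x) ∂ν :=
  levy_measure_representation_general K ν hmom h heq1 heq2
end

section
/- Let K > 0 and let h : [0,∞) → [0,∞) be continuous and bounded with h(0) = 0, satisfying h(s) = √(2s/π) − K ∫_0^s h(u)²/√(2π(s−u)) du for all s ≥ 0. Assume h is differentiable on (0,∞), that its derivative satisfies h'(s) = 1/√(2πs) − 2K ∫_0^s h(s−u)h'(s−u)/√(2πu) du for all s > 0, and that s ↦ h(s)h'(s) is bounded on (0,1]. Then lim_{s→0⁺} h(s)h'(s) = 1/π. -/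
/-!
Write `A s = √(2s/π)` and `A' s = 1/√(2πs)`, so that `A * A' = 1/π`, and let `B`, `C` be the two
convolution integrals, so that `h * h' = (A - K B) (A' - 2K C)`. Since `∫₀ˢ du/√(2πu) = A s`, an
integrand bounded by `M` on `(0, s)` gives an integral bounded by `M · A s`. Continuity of `h` at `0`
with `h 0 = 0` makes `B = o(A)`, and boundedness of `h h'` makes `C = O(A)`; so the cross terms
`A C = O(A²)`, `B A' = o(1)` and `B C = o(A²)` all vanish as `s → 0⁺`.
-/

open MeasureTheory Set Filter Real Asymptotics Topology

-- At `u = 0` both sides are junk zeros: `1 / 0 = 0` and `0 ^ (-1/2) = 0`.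
lemma one_div_sqrt_two_pi_mul_eq_rpow {u : ℝ} (hu : 0 ≤ u) :
    1 / √(2 * π * u) = (√(2 * π))⁻¹ * u ^ (-(1 / 2) : ℝ) := by
  rw [sqrt_mul (by positivity), rpow_neg hu, sqrt_eq_rpow u, one_div, mul_inv]

lemma intervalIntegrable_one_div_sqrt_two_pi_mul {s : ℝ} (hs : 0 ≤ s) :
    IntervalIntegrable (fun u => 1 / √(2 * π * u)) volume 0 s := by
  refine IntervalIntegrable.congr (fun u hu => ?_) ((intervalIntegral.intervalIntegrable_rpow'
    (by norm_num : (-1 : ℝ) < -(1 / 2))).const_mul (√(2 * π))⁻¹)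
  rw [uIoc_of_le hs] at hu
  exact (one_div_sqrt_two_pi_mul_eq_rpow hu.1.le).symm

lemma integral_one_div_sqrt_two_pi_mul {s : ℝ} (hs : 0 ≤ s) :
    ∫ u in (0 : ℝ)..s, 1 / √(2 * π * u) = √(2 * s / π) := by
  rw [intervalIntegral.integral_congr (g := fun u => (√(2 * π))⁻¹ * u ^ (-(1 / 2) : ℝ))
      fun u hu => one_div_sqrt_two_pi_mul_eq_rpow (by rw [uIcc_of_le hs] at hu; exact hu.1),
    intervalIntegral.integral_const_mul, integral_rpow (by norm_num),
    zero_rpow (by norm_num), show (-(1 / 2) + 1 : ℝ) = 1 / 2 by norm_num, ← sqrt_eq_rpow,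
    sqrt_div' _ pi_pos.le, sqrt_mul zero_le_two, sqrt_mul zero_le_two]
  have hπ : 0 < √π := sqrt_pos.2 pi_pos
  have h2 : 0 < √2 := by positivity
  field_simp
  rw [sq_sqrt zero_le_two]
  ring

lemma abs_integral_div_sqrt_two_pi_mul_le {f : ℝ → ℝ} {M s : ℝ} (hs : 0 ≤ s)
    (hf : ∀ u ∈ Ioo 0 s, |f u| ≤ M) :
    |∫ u in (0 : ℝ)..s, f u / √(2 * π * u)| ≤ M * √(2 * s / π) := by
  rw [← integral_one_div_sqrt_two_pi_mul hs, ← intervalIntegral.integral_const_mul, ← norm_eq_abs]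
  refine intervalIntegral.norm_integral_le_of_norm_le hs ?_
    ((intervalIntegrable_one_div_sqrt_two_pi_mul hs).const_mul M)
  filter_upwards [Measure.ae_ne volume s] with u hus hu
  rw [norm_div, norm_of_nonneg (sqrt_nonneg _), mul_one_div]
  exact div_le_div_of_nonneg_right (hf u ⟨hu.1, lt_of_le_of_ne hu.2 hus⟩) (sqrt_nonneg _)

lemma integral_div_sqrt_two_pi_mul_sub_s11 (f : ℝ → ℝ) (s : ℝ) :
    ∫ u in (0 : ℝ)..s, f u / √(2 * π * (s - u)) = ∫ u in (0 : ℝ)..s, f (s - u) / √(2 * π * u) := by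
  simpa using (intervalIntegral.integral_comp_sub_left
    (fun v => f v / √(2 * π * (s - v))) s (a := 0) (b := s)).symm

lemma eventually_abs_integral_comp_sub_div_sqrt_le {f : ℝ → ℝ} {M : ℝ}
    (hf : ∀ᶠ u in 𝓝[>] 0, |f u| ≤ M) :
    ∀ᶠ s in 𝓝[>] 0, |∫ u in (0 : ℝ)..s, f (s - u) / √(2 * π * u)| ≤ M * √(2 * s / π) := by
  obtain ⟨δ, hδ, hfδ⟩ := (nhdsGT_basis (0 : ℝ)).eventually_iff.1 hf
  filter_upwards [Ioo_mem_nhdsGT hδ] with s hs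
  refine abs_integral_div_sqrt_two_pi_mul_le hs.1.le fun u hu => hfδ ⟨?_, ?_⟩ <;>
    linarith [hu.1, hu.2, hs.2]

lemma isBigO_integral_comp_sub_div_sqrt {f : ℝ → ℝ} {M : ℝ}
    (hf : ∀ᶠ u in 𝓝[>] 0, |f u| ≤ M) :
    (fun s => ∫ u in (0 : ℝ)..s, f (s - u) / √(2 * π * u)) =O[𝓝[>] 0] fun s => √(2 * s / π) :=
  IsBigO.of_bound M <| (eventually_abs_integral_comp_sub_div_sqrt_le hf).mono fun s hs => by
    rwa [norm_of_nonneg (sqrt_nonneg _)]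

lemma isLittleO_integral_comp_sub_div_sqrt {f : ℝ → ℝ} (hf : Tendsto f (𝓝[>] 0) (𝓝 0)) :
    (fun s => ∫ u in (0 : ℝ)..s, f (s - u) / √(2 * π * u)) =o[𝓝[>] 0] fun s => √(2 * s / π) :=
  IsLittleO.of_bound fun c hc =>
    (eventually_abs_integral_comp_sub_div_sqrt_le
      ((Metric.tendsto_nhds.1 hf c hc).mono fun u hu => by simpa using hu.le)).mono
      fun s hs => by rwa [norm_of_nonneg (sqrt_nonneg _)]

lemma tendsto_sub_mul_sub_of_isLittleO {α : Type*} {l : Filter α} {A A' B C : α → ℝ} {c K L : ℝ}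
    (hA : Tendsto A l (𝓝 0)) (hAA' : ∀ᶠ x in l, A x * A' x = c)
    (hB : B =o[l] A) (hC : C =O[l] A) :
    Tendsto (fun x => (A x - K * B x) * (A' x - L * C x)) l (𝓝 c) := by
  have hAA : Tendsto (fun x => A x * A x) l (𝓝 0) := by simpa using hA.mul hA
  have hc : Tendsto (fun x => A x * A' x) l (𝓝 c) :=
    tendsto_const_nhds.congr' (hAA'.mono fun x hx => hx.symm)
  have hAC : Tendsto (fun x => A x * C x) l (𝓝 0) :=
    ((isBigO_refl A l).mul hC).trans_tendsto hAA
  have hBA' : Tendsto (fun x => B x * A' x) l (𝓝 0) :=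
    (isLittleO_one_iff ℝ).1 ((hB.mul_isBigO (isBigO_refl A' l)).trans_isBigO (hc.isBigO_one ℝ))
  have hBC : Tendsto (fun x => B x * C x) l (𝓝 0) :=
    (hB.mul_isBigO hC).isBigO.trans_tendsto hAA
  have := ((hc.sub (hAC.const_mul L)).sub (hBA'.const_mul K)).add (hBC.const_mul (K * L))
  simp only [mul_zero, sub_zero, add_zero] at this
  exact this.congr fun x => by ring

lemma sqrt_two_mul_div_pi_mul_one_div_sqrt {s : ℝ} (hs : 0 < s) :
    √(2 * s / π) * (1 / √(2 * π * s)) = 1 / π := by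
  rw [mul_one_div, ← sqrt_div' _ (by positivity),
    show 2 * s / π / (2 * π * s) = (1 / π) ^ 2 by field_simp, sqrt_sq (by positivity)]

theorem hh'_limit_general (K : ℝ) (h h' : ℝ → ℝ)
    (hcont : ContinuousOn h (Ici 0))
    (h0 : h 0 = 0)
    (heq : ∀ s : ℝ, 0 ≤ s →
      h s = Real.sqrt (2 * s / Real.pi)
        - K * ∫ u in (0:ℝ)..s, (h u) ^ 2 / Real.sqrt (2 * Real.pi * (s - u)))
    (hderiveq : ∀ s : ℝ, 0 < s →
      h' s = 1 / Real.sqrt (2 * Real.pi * s)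
        - 2 * K * ∫ u in (0:ℝ)..s, h (s - u) * h' (s - u) / Real.sqrt (2 * Real.pi * u))
    (hprodbdd : ∃ C : ℝ, ∀ s ∈ Ioc (0:ℝ) 1, |h s * h' s| ≤ C) :
    Tendsto (fun s => h s * h' s) (nhdsWithin 0 (Ioi 0)) (nhds (1 / Real.pi)) := by
  obtain ⟨M, hM⟩ := hprodbdd
  have hA : Tendsto (fun s => √(2 * s / π)) (𝓝[>] 0) (𝓝 0) := by
    refine tendsto_nhdsWithin_of_tendsto_nhds ?_
    simpa using ((continuous_const.mul continuous_id).div_const π).sqrt.tendsto 0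
  have hh : Tendsto h (𝓝[>] 0) (𝓝 0) := by
    simpa [h0] using ((hcont 0 self_mem_Ici).mono Ioi_subset_Ici_self).tendsto
  have hB := isLittleO_integral_comp_sub_div_sqrt (by simpa using hh.pow 2)
  have hC := isBigO_integral_comp_sub_div_sqrt (f := fun s => h s * h' s) (M := M)
    (by filter_upwards [Ioc_mem_nhdsGT one_pos] using hM)
  refine (tendsto_sub_mul_sub_of_isLittleO (K := K) (L := 2 * K)
    (A' := fun s => 1 / √(2 * π * s)) hA ?_ hB hC).congr' ?_
  · filter_upwards [self_mem_nhdsWithin] with s hs using sqrt_two_mul_div_pi_mul_one_div_sqrt hs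
  filter_upwards [self_mem_nhdsWithin] with s hs
  rw [heq s hs.le, hderiveq s hs, integral_div_sqrt_two_pi_mul_sub_s11]

theorem hh'_limit (K : ℝ) (hK : 0 < K) (h h' : ℝ → ℝ)
    (hcont : ContinuousOn h (Ici 0))
    (hbdd : ∃ C : ℝ, ∀ s : ℝ, 0 ≤ s → |h s| ≤ C)
    (hnn : ∀ s : ℝ, 0 ≤ s → 0 ≤ h s)
    (h0 : h 0 = 0)
    (heq : ∀ s : ℝ, 0 ≤ s →
      h s = Real.sqrt (2 * s / Real.pi)
        - K * ∫ u in (0:ℝ)..s, (h u) ^ 2 / Real.sqrt (2 * Real.pi * (s - u)))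
    (hderiv : ∀ s : ℝ, 0 < s → HasDerivAt h (h' s) s)
    (hderiveq : ∀ s : ℝ, 0 < s →
      h' s = 1 / Real.sqrt (2 * Real.pi * s)
        - 2 * K * ∫ u in (0:ℝ)..s, h (s - u) * h' (s - u) / Real.sqrt (2 * Real.pi * u))
    (hprodbdd : ∃ C : ℝ, ∀ s ∈ Ioc (0:ℝ) 1, |h s * h' s| ≤ C) :
    Tendsto (fun s => h s * h' s) (nhdsWithin 0 (Ioi 0)) (nhds (1 / Real.pi)) :=
  hh'_limit_general K h h' hcont h0 heq hderiveq hprodbdd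
end

section
/- Let n ≥ 1, let φ_1, …, φ_n be nonnegative Schwartz functions on ℝ, let 0 ≤ t_1 < t_2 < ⋯ < t_n ≤ 1, and set ψ(y,t) = Σ_{k=1}^n φ_k(y) 1_{[0,t_k]}(t). Then for every x ∈ ℝ and s ∈ [0,1], lim_{T→∞} ∫_0^s (2πu)^{−1/2} (∫_ℝ e^{−(x−y)²/(2Tu)} ψ(y, 1−s+u) dy) du = Σ_{k=1}^n (∫_ℝ φ_k(y) dy) · ∫_0^s 1_{[0,t_k]}(1−u)/√(2π(s−u)) du. -/
open MeasureTheory Set Filter Real Topology Function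
open scoped Interval

/-!
After the substitution `u ↦ s - u` the right-hand side is `∫₀ˢ (2πu)^(-1/2) ∫ ψ(y, 1 - s + u) dy du`.
The Gaussian factor `exp (-(x - y)² / (2Tu))` lies in `[0, 1]` and tends to `1` as `T → ∞`, so
dominated convergence applies twice: in `y`, dominated by `∑ₖ |φₖ|`, and then in `u`, dominated
by `(2πu)^(-1/2) ∫ ∑ₖ |φₖ|`, which is integrable.
-/

/-- For `u < 0` both sides are junk zeros: `√u = 0`, and `u ^ r = exp (r log u) cos (rπ)` with
`cos (-π/2) = 0`. -/
theorem Real.inv_sqrt_eq_rpow_neg_half_s14 (u : ℝ) : (√u)⁻¹ = u ^ (-(1 / 2 : ℝ)) := by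
  rcases le_or_gt 0 u with hu | hu
  · rw [sqrt_eq_rpow, rpow_neg hu]
  · rw [sqrt_eq_zero_of_nonpos hu.le, inv_zero, rpow_def_of_neg hu,
      show -(1 / 2 : ℝ) * π = -(π / 2) by ring, cos_neg, cos_pi_div_two, mul_zero]

theorem intervalIntegrable_one_div_sqrt_const_mul {c : ℝ} (hc : 0 ≤ c) (a b : ℝ) :
    IntervalIntegrable (fun u => 1 / √(c * u)) volume a b := by
  have h : (fun u => 1 / √(c * u)) = fun u => (√c)⁻¹ * u ^ (-(1 / 2 : ℝ)) := by
    ext u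
    rw [one_div, sqrt_mul hc, mul_inv, inv_sqrt_eq_rpow_neg_half_s14 u]
  rw [h]
  exact (intervalIntegral.intervalIntegrable_rpow' (by norm_num)).const_mul _

theorem IntervalIntegrable.mul_bdd {𝕜 : Type*} [NormedField 𝕜] {f g : ℝ → 𝕜} {a b c : ℝ}
    {μ : Measure ℝ} (hf : IntervalIntegrable f μ a b)
    (hg : AEStronglyMeasurable g (μ.restrict (Ι a b))) (hgc : ∀ᵐ u ∂μ.restrict (Ι a b), ‖g u‖ ≤ c) :
    IntervalIntegrable (fun u => f u * g u) μ a b :=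
  intervalIntegrable_iff.2 ((intervalIntegrable_iff.1 hf).mul_bdd hg hgc)

theorem norm_exp_neg_sq_div_mul_le {a : ℝ} (ha : 0 ≤ a) (z v : ℝ) :
    ‖exp (-z ^ 2 / a) * v‖ ≤ ‖v‖ := by
  rw [norm_mul, norm_of_nonneg (exp_pos _).le]
  exact mul_le_of_le_one_left (norm_nonneg v)
    (exp_le_one_iff.2 (div_nonpos_of_nonpos_of_nonneg (neg_nonpos.2 (sq_nonneg z)) ha))

theorem tendsto_integral_exp_neg_sq_div_mul {g : ℝ → ℝ} (hg : Integrable g) (x : ℝ) {u : ℝ}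
    (hu : 0 < u) :
    Tendsto (fun T => ∫ y, exp (-(x - y) ^ 2 / (2 * T * u)) * g y) atTop (𝓝 (∫ y, g y)) := by
  refine tendsto_integral_filter_of_dominated_convergence (fun y => ‖g y‖) ?_ ?_ hg.norm ?_
  · exact Eventually.of_forall fun T =>
      (by fun_prop : Continuous fun y => exp (-(x - y) ^ 2 / (2 * T * u))).aestronglyMeasurable.mul
        hg.aestronglyMeasurable
  · filter_upwards [eventually_ge_atTop 0] with T hT
    exact ae_of_all _ fun y => norm_exp_neg_sq_div_mul_le (by positivity) _ _
  · refine ae_of_all _ fun y => ?_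
    have h : Tendsto (fun T => -(x - y) ^ 2 / (2 * T * u)) atTop (𝓝 0) :=
      tendsto_const_nhds.div_atTop ((tendsto_id.const_mul_atTop two_pos).atTop_mul_const hu)
    simpa using ((continuous_exp.tendsto 0).comp h).mul_const (g y)

theorem tendsto_intervalIntegral_one_div_sqrt_mul_integral_exp {ψ : ℝ → ℝ → ℝ} {G : ℝ → ℝ}
    (hψ : Measurable (uncurry ψ)) (hG : Integrable G) (hψG : ∀ u y, ‖ψ u y‖ ≤ G y) (x s : ℝ) :
    Tendsto (fun T => ∫ u in 0..s, 1 / √(2 * π * u) *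
        ∫ y, exp (-(x - y) ^ 2 / (2 * T * u)) * ψ u y)
      atTop (𝓝 (∫ u in 0..s, 1 / √(2 * π * u) * ∫ y, ψ u y)) := by
  have hweight_zero : ∀ u ≤ 0, 1 / √(2 * π * u) = 0 := fun u hu => by
    rw [sqrt_eq_zero_of_nonpos (mul_nonpos_of_nonneg_of_nonpos (by positivity) hu), div_zero]
  refine intervalIntegral.tendsto_integral_filter_of_dominated_convergence
    (fun u => 1 / √(2 * π * u) * ∫ y, G y) ?_ ?_
    ((intervalIntegrable_one_div_sqrt_const_mul (by positivity) 0 s).mul_const _) ?_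
  · refine Eventually.of_forall fun T => ?_
    have hF : Measurable fun p : ℝ × ℝ => exp (-(x - p.2) ^ 2 / (2 * T * p.1)) * uncurry ψ p := by
      fun_prop
    exact (by fun_prop : Measurable fun u => 1 / √(2 * π * u)).aestronglyMeasurable.mul
      hF.stronglyMeasurable.integral_prod_right'.aestronglyMeasurable
  · filter_upwards [eventually_ge_atTop 0] with T hT
    refine ae_of_all _ fun u _ => ?_
    rcases le_or_gt u 0 with hu | hu
    · simp [hweight_zero u hu]
    rw [norm_mul, norm_of_nonneg (by positivity)]
    refine mul_le_mul_of_nonneg_left (norm_integral_le_of_norm_le hG (ae_of_all _ fun y => ?_))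
      (by positivity)
    exact (norm_exp_neg_sq_div_mul_le (by positivity) _ _).trans (hψG u y)
  · refine ae_of_all _ fun u _ => ?_
    rcases le_or_gt u 0 with hu | hu
    · simpa only [hweight_zero u hu, zero_mul] using tendsto_const_nhds
    have hψu : Integrable (ψ u) :=
      hG.mono' (hψ.comp measurable_prodMk_left).aestronglyMeasurable (ae_of_all _ (hψG u))
    exact (tendsto_integral_exp_neg_sq_div_mul hψu x hu).const_mul _

theorem intervalIntegral_comp_one_sub_div_sqrt (f : ℝ → ℝ) (s : ℝ) :
    ∫ u in 0..s, f (1 - u) / √(2 * π * (s - u)) = ∫ u in 0..s, f (1 - s + u) / √(2 * π * u) := by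
  simpa using (intervalIntegral.integral_comp_sub_left (a := 0) (b := s)
    (fun u => f (1 - s + u) / √(2 * π * u)) s)

theorem intervalIntegral_one_div_sqrt_mul_integral_sum {ι : Type*} [Fintype ι]
    {φ χ : ι → ℝ → ℝ} (hφ : ∀ k, Integrable (φ k)) (hχ : ∀ k, Measurable (χ k)) {C : ℝ}
    (hχC : ∀ k v, ‖χ k v‖ ≤ C) (s : ℝ) :
    ∫ u in 0..s, 1 / √(2 * π * u) * ∫ y, ∑ k, φ k y * χ k (1 - s + u) =
      ∑ k, (∫ y, φ k y) * ∫ u in 0..s, χ k (1 - u) / √(2 * π * (s - u)) := by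
  have hinner : ∀ u, ∫ y, ∑ k, φ k y * χ k (1 - s + u) = ∑ k, (∫ y, φ k y) * χ k (1 - s + u) :=
    fun u => by
      rw [integral_finsetSum _ fun k _ => (hφ k).mul_const _]
      exact Finset.sum_congr rfl fun k _ => integral_mul_const _ _
  simp_rw [intervalIntegral_comp_one_sub_div_sqrt, hinner, Finset.mul_sum]
  rw [intervalIntegral.integral_finsetSum]
  · refine Finset.sum_congr rfl fun k _ => ?_
    rw [← intervalIntegral.integral_const_mul]
    refine intervalIntegral.integral_congr fun u _ => ?_
    ring
  · refine fun k _ => (intervalIntegrable_one_div_sqrt_const_mul (by positivity) 0 s).mul_bdd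
      (c := ‖∫ y, φ k y‖ * C)
      (((hχ k).comp (measurable_const_add _)).const_mul _).aestronglyMeasurable
      (ae_of_all _ fun u => ?_)
    rw [norm_mul]
    exact mul_le_mul_of_nonneg_left (hχC k _) (norm_nonneg _)

theorem free_term_limit_general (n : ℕ) (φ : Fin n → SchwartzMap ℝ ℝ) (t : Fin n → ℝ) (x s : ℝ) :
    Tendsto (fun T : ℝ =>
        ∫ u in (0:ℝ)..s, (1 / Real.sqrt (2 * Real.pi * u)) *
          ∫ y : ℝ, Real.exp (-(x - y) ^ 2 / (2 * T * u)) *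
            (∑ k, φ k y * Set.indicator (Icc (0:ℝ) (t k)) (fun _ => (1:ℝ)) (1 - s + u)))
      atTop
      (nhds (∑ k, (∫ y : ℝ, φ k y) *
        ∫ u in (0:ℝ)..s,
          Set.indicator (Icc (0:ℝ) (t k)) (fun _ => (1:ℝ)) (1 - u)
            / Real.sqrt (2 * Real.pi * (s - u)))) := by
  set χ : Fin n → ℝ → ℝ := fun k => (Icc (0:ℝ) (t k)).indicator fun _ => 1
  have hχ : ∀ k, Measurable (χ k) := fun k => measurable_const.indicator measurableSet_Icc
  have hχ_le : ∀ k v, ‖χ k v‖ ≤ 1 := fun k v => (norm_indicator_le_norm_self _ _).trans_eq norm_one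
  have hψ : Measurable (uncurry fun u y => ∑ k, φ k y * χ k (1 - s + u)) :=
    Finset.measurable_sum _ fun k _ => ((φ k).continuous.measurable.comp measurable_snd).mul
      ((hχ k).comp (measurable_fst.const_add _))
  have hψG : ∀ u y, ‖∑ k, φ k y * χ k (1 - s + u)‖ ≤ ∑ k, ‖φ k y‖ := fun u y =>
    (norm_sum_le _ _).trans (Finset.sum_le_sum fun k _ => by
      rw [norm_mul]; exact mul_le_of_le_one_right (norm_nonneg _) (hχ_le k _))
  have hG : Integrable fun y => ∑ k, ‖φ k y‖ :=
    integrable_finsetSum _ fun k _ => (φ k).integrable.norm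
  rw [← intervalIntegral_one_div_sqrt_mul_integral_sum (fun k => (φ k).integrable) hχ hχ_le s]
  exact tendsto_intervalIntegral_one_div_sqrt_mul_integral_exp hψ hG hψG x s

theorem free_term_limit (n : ℕ) (hn : 1 ≤ n)
    (φ : Fin n → SchwartzMap ℝ ℝ) (hφ : ∀ k (y : ℝ), 0 ≤ φ k y)
    (t : Fin n → ℝ) (ht0 : ∀ k, 0 ≤ t k) (ht1 : ∀ k, t k ≤ 1)
    (htmono : StrictMono t)
    (x s : ℝ) (hs : s ∈ Icc (0:ℝ) 1) :
    Tendsto (fun T : ℝ =>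
        ∫ u in (0:ℝ)..s, (1 / Real.sqrt (2 * Real.pi * u)) *
          ∫ y : ℝ, Real.exp (-(x - y) ^ 2 / (2 * T * u)) *
            (∑ k, φ k y * Set.indicator (Icc (0:ℝ) (t k)) (fun _ => (1:ℝ)) (1 - s + u)))
      atTop
      (nhds (∑ k, (∫ y : ℝ, φ k y) *
        ∫ u in (0:ℝ)..s,
          Set.indicator (Icc (0:ℝ) (t k)) (fun _ => (1:ℝ)) (1 - u)
            / Real.sqrt (2 * Real.pi * (s - u)))) :=
  free_term_limit_general n φ t x s
end

section
/- Let n ≥ 1, let φ_1, …, φ_n be nonnegative Schwartz functions on ℝ, let 0 ≤ t_1 < t_2 < ⋯ < t_n ≤ 1, and set ψ(y,t) = Σ_{k=1}^n φ_k(y) 1_{[0,t_k]}(t). Let p_s(x) = (2πs)^{−1/2} e^{−x²/(2s)}. Then for every x ∈ ℝ, lim_{T→∞} ∫_0^1 (∫_ℝ p_s(x − T^{−1/2} y) ψ(y,s) dy) ds = Σ_{k=1}^n (∫_0^{t_k} p_s(x) ds) · (∫_ℝ φ_k(y) dy). -/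
open MeasureTheory Set Filter

open scoped Topology

/- Each summand is dominated by `p_s(0) |φ_k(y)|`, which is integrable on `(0, 1] × ℝ` because
`p_s(0) = (2π s)^{-1/2}`, so dominated convergence applies twice: in `y` for fixed `s`, where
`p_s(x - T^{-1/2} y) → p_s(x)` by continuity, and then in `s`. Linearity splits the sum over `k`,
and the indicator cuts the `s`-integral down to `[0, t_k]`. -/

-- For `s ≤ 0` this is `0`: `√` of a nonpositive number is `0`, and so is `1 / 0`.
noncomputable def heatKernel (s x : ℝ) : ℝ :=
  1 / Real.sqrt (2 * Real.pi * s) * Real.exp (-x ^ 2 / (2 * s))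

lemma heatKernel_nonneg (s x : ℝ) : 0 ≤ heatKernel s x := by
  unfold heatKernel; positivity

lemma heatKernel_le_heatKernel_zero (s x : ℝ) : heatKernel s x ≤ heatKernel s 0 := by
  unfold heatKernel
  rcases le_or_gt s 0 with hs | hs
  · simp [Real.sqrt_eq_zero'.2 (by nlinarith [Real.pi_pos] : 2 * Real.pi * s ≤ 0)]
  · have hexp : Real.exp (-x ^ 2 / (2 * s)) ≤ 1 :=
      Real.exp_le_one_iff.2 (div_nonpos_of_nonpos_of_nonneg (by nlinarith) (by positivity))
    simpa using mul_le_of_le_one_right (by positivity) hexp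

lemma measurable_heatKernel : Measurable (Function.uncurry heatKernel) := by
  unfold heatKernel Function.uncurry; fun_prop

lemma continuous_heatKernel (s : ℝ) : Continuous (heatKernel s) := by
  unfold heatKernel; fun_prop

lemma intervalIntegrable_heatKernel_zero {a : ℝ} (ha : 0 ≤ a) :
    IntervalIntegrable (fun s => heatKernel s 0) volume 0 a := by
  have hrpow := (intervalIntegral.intervalIntegrable_rpow' (a := 0) (b := a)
    (r := -(1 / 2)) (by norm_num)).const_mul (Real.sqrt (2 * Real.pi))⁻¹
  refine (intervalIntegrable_iff_integrableOn_Ioc_of_le ha).2 <|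
    ((intervalIntegrable_iff_integrableOn_Ioc_of_le ha).1 hrpow).congr_fun (fun s hs => ?_)
      measurableSet_Ioc
  dsimp only
  rw [heatKernel, Real.sqrt_mul (by positivity) s, Real.rpow_neg hs.1.le, ← Real.sqrt_eq_rpow,
    one_div, mul_inv]
  simp

lemma norm_heatKernel_mul_le (s x r : ℝ) :
    ‖heatKernel s x * r‖ ≤ heatKernel s 0 * ‖r‖ := by
  rw [norm_mul, Real.norm_of_nonneg (heatKernel_nonneg _ _)]
  gcongr
  exact heatKernel_le_heatKernel_zero _ _

lemma intervalIntegral_indicator_Icc {g : ℝ → ℝ} {b t : ℝ} (ht0 : 0 ≤ t) (htb : t ≤ b) :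
    ∫ s in 0..b, (Icc 0 t).indicator g s = ∫ s in 0..t, g s := by
  rw [intervalIntegral.integral_of_le (ht0.trans htb), integral_indicator measurableSet_Icc,
    Measure.restrict_restrict measurableSet_Icc, intervalIntegral.integral_of_le ht0]
  congr 2
  ext s
  simp only [mem_inter_iff, mem_Icc, mem_Ioc]
  constructor
  · rintro ⟨⟨-, hst⟩, hs0, -⟩
    exact ⟨hs0, hst⟩
  · rintro ⟨hs0, hst⟩
    exact ⟨⟨hs0.le, hst⟩, hs0, hst.trans htb⟩

section

variable {f : ℝ → ℝ}

lemma integrable_heatKernel_mul (hf : Integrable f) (s x c : ℝ) :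
    Integrable (fun y => heatKernel s (x - c * y) * f y) :=
  (hf.norm.const_mul _).mono'
    (((continuous_heatKernel s).comp (by fun_prop)).aestronglyMeasurable.mul hf.1)
    (.of_forall fun y => norm_heatKernel_mul_le s _ (f y))

lemma norm_integral_heatKernel_mul_le (hf : Integrable f) (s x c : ℝ) :
    ‖∫ y, heatKernel s (x - c * y) * f y‖ ≤ heatKernel s 0 * ∫ y, ‖f y‖ := by
  rw [← integral_const_mul]
  exact norm_integral_le_of_norm_le (hf.norm.const_mul _)
    (.of_forall fun y => norm_heatKernel_mul_le s _ (f y))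

lemma aestronglyMeasurable_integral_heatKernel_mul (hf : Integrable f) (x c : ℝ)
    (μ : Measure ℝ) [SFinite μ] :
    AEStronglyMeasurable (fun s => ∫ y, heatKernel s (x - c * y) * f y) μ := by
  refine AEStronglyMeasurable.integral_prod_right' (f := fun z : ℝ × ℝ =>
    heatKernel z.1 (x - c * z.2) * f z.2) (AEStronglyMeasurable.mul ?_ ?_)
  · exact (measurable_heatKernel.comp
      (measurable_fst.prodMk (measurable_const.sub (measurable_const.mul measurable_snd))))
      |>.aestronglyMeasurable
  · exact hf.aestronglyMeasurable.comp_quasiMeasurePreserving Measure.quasiMeasurePreserving_snd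

lemma intervalIntegrable_integral_heatKernel_mul (hf : Integrable f) {a : ℝ}
    (ha : 0 ≤ a) (x c : ℝ) :
    IntervalIntegrable (fun s => ∫ y, heatKernel s (x - c * y) * f y) volume 0 a :=
  ((intervalIntegrable_heatKernel_zero ha).mul_const _).mono_fun'
    (aestronglyMeasurable_integral_heatKernel_mul hf x c _)
    (.of_forall fun s => norm_integral_heatKernel_mul_le hf s x c)

variable {ι : Type*} {l : Filter ι} [l.IsCountablyGenerated] {ε : ι → ℝ}

lemma tendsto_integral_heatKernel_mul (hf : Integrable f)
    (hε : Tendsto ε l (𝓝 0)) (s x : ℝ) :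
    Tendsto (fun i => ∫ y, heatKernel s (x - ε i * y) * f y) l
      (𝓝 (heatKernel s x * ∫ y, f y)) := by
  rw [← integral_const_mul]
  refine tendsto_integral_filter_of_dominated_convergence (fun y => heatKernel s 0 * ‖f y‖)
    (.of_forall fun i => (integrable_heatKernel_mul hf s x (ε i)).aestronglyMeasurable)
    (.of_forall fun i => .of_forall fun y => norm_heatKernel_mul_le s _ (f y))
    (hf.norm.const_mul _) (.of_forall fun y => ?_)
  have hshift : Tendsto (fun i => x - ε i * y) l (𝓝 x) := by
    simpa using tendsto_const_nhds.sub (hε.mul_const y)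
  exact (((continuous_heatKernel s).tendsto x).comp hshift).mul_const (f y)

lemma tendsto_intervalIntegral_integral_heatKernel_mul (hf : Integrable f)
    (hε : Tendsto ε l (𝓝 0)) {a : ℝ} (ha : 0 ≤ a) (x : ℝ) :
    Tendsto (fun i => ∫ s in 0..a, ∫ y, heatKernel s (x - ε i * y) * f y) l
      (𝓝 ((∫ s in 0..a, heatKernel s x) * ∫ y, f y)) := by
  rw [← intervalIntegral.integral_mul_const]
  exact intervalIntegral.tendsto_integral_filter_of_dominated_convergence
    (fun s => heatKernel s 0 * ∫ y, ‖f y‖)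
    (.of_forall fun i => aestronglyMeasurable_integral_heatKernel_mul hf x (ε i) _)
    (.of_forall fun i => .of_forall fun s _ => norm_integral_heatKernel_mul_le hf s x (ε i))
    ((intervalIntegrable_heatKernel_zero ha).mul_const _)
    (.of_forall fun s _ => tendsto_integral_heatKernel_mul hf hε s x)

end

lemma intervalIntegral_integral_heatKernel_mul_sum_indicator {ι : Type*} [Fintype ι]
    {φ : ι → ℝ → ℝ} (hφ : ∀ k, Integrable (φ k)) {t : ι → ℝ} (ht0 : ∀ k, 0 ≤ t k)
    (ht1 : ∀ k, t k ≤ 1) (x c : ℝ) :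
    ∫ s in 0..1, ∫ y, heatKernel s (x - c * y) *
        ∑ k, φ k y * (Icc 0 (t k)).indicator (fun _ => (1:ℝ)) s
      = ∑ k, ∫ s in 0..t k, ∫ y, heatKernel s (x - c * y) * φ k y := by
  have hsplit : ∀ s, ∫ y, heatKernel s (x - c * y) *
        ∑ k, φ k y * (Icc 0 (t k)).indicator (fun _ => (1:ℝ)) s
      = ∑ k, (Icc 0 (t k)).indicator (fun s => ∫ y, heatKernel s (x - c * y) * φ k y) s := by
    intro s
    simp_rw [Finset.mul_sum, ← mul_assoc]
    rw [integral_finsetSum _ fun k _ => (integrable_heatKernel_mul (hφ k) s x c).mul_const _]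
    refine Finset.sum_congr rfl fun k _ => ?_
    by_cases hs : s ∈ Icc 0 (t k) <;> simp [hs]
  simp_rw [hsplit]
  rw [intervalIntegral.integral_finsetSum fun k _ => ?_]
  · exact Finset.sum_congr rfl fun k _ => intervalIntegral_indicator_Icc (ht0 k) (ht1 k)
  have h := intervalIntegrable_integral_heatKernel_mul (hφ k) zero_le_one x c
  exact ⟨h.1.indicator measurableSet_Icc, h.2.indicator measurableSet_Icc⟩

theorem leading_term_limit_general (n : ℕ)
    (φ : Fin n → SchwartzMap ℝ ℝ)
    (t : Fin n → ℝ) (ht0 : ∀ k, 0 ≤ t k) (ht1 : ∀ k, t k ≤ 1)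
    (x : ℝ) :
    Tendsto (fun T : ℝ =>
        ∫ s in (0:ℝ)..1, ∫ y : ℝ,
          (1 / Real.sqrt (2 * Real.pi * s)) *
            Real.exp (-(x - (Real.sqrt T)⁻¹ * y) ^ 2 / (2 * s)) *
            (∑ k, φ k y * Set.indicator (Icc (0:ℝ) (t k)) (fun _ => (1:ℝ)) s))
      atTop
      (nhds (∑ k, (∫ s in (0:ℝ)..(t k),
          (1 / Real.sqrt (2 * Real.pi * s)) * Real.exp (-x ^ 2 / (2 * s))) *
        ∫ y : ℝ, φ k y)) := by
  have hφ : ∀ k, Integrable (φ k) := fun k => (φ k).integrable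
  have hε : Tendsto (fun T : ℝ => (Real.sqrt T)⁻¹) atTop (𝓝 0) :=
    tendsto_inv_atTop_zero.comp Real.tendsto_sqrt_atTop
  change Tendsto (fun T : ℝ => ∫ s in (0:ℝ)..1, ∫ y, heatKernel s (x - (Real.sqrt T)⁻¹ * y) *
      ∑ k, φ k y * (Icc 0 (t k)).indicator (fun _ => (1:ℝ)) s) atTop
    (𝓝 (∑ k, (∫ s in (0:ℝ)..t k, heatKernel s x) * ∫ y, φ k y))
  simp_rw [intervalIntegral_integral_heatKernel_mul_sum_indicator hφ ht0 ht1]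
  exact tendsto_finsetSum _ fun k _ =>
    tendsto_intervalIntegral_integral_heatKernel_mul (hφ k) hε (ht0 k) x

theorem leading_term_limit (n : ℕ) (hn : 1 ≤ n)
    (φ : Fin n → SchwartzMap ℝ ℝ) (hφ : ∀ k (y : ℝ), 0 ≤ φ k y)
    (t : Fin n → ℝ) (ht0 : ∀ k, 0 ≤ t k) (ht1 : ∀ k, t k ≤ 1)
    (htmono : StrictMono t) (x : ℝ) :
    Tendsto (fun T : ℝ =>
        ∫ s in (0:ℝ)..1, ∫ y : ℝ,
          (1 / Real.sqrt (2 * Real.pi * s)) *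
            Real.exp (-(x - (Real.sqrt T)⁻¹ * y) ^ 2 / (2 * s)) *
            (∑ k, φ k y * Set.indicator (Icc (0:ℝ) (t k)) (fun _ => (1:ℝ)) s))
      atTop
      (nhds (∑ k, (∫ s in (0:ℝ)..(t k),
          (1 / Real.sqrt (2 * Real.pi * s)) * Real.exp (-x ^ 2 / (2 * s))) *
        ∫ y : ℝ, φ k y)) :=
  leading_term_limit_general n φ t ht0 ht1 x
end
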